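/- arXiv:math/0703087 — 9 statements merged into one kernel-verified Lean document; each statement's English description precedes it below -/
import Mathlib

section
/- For all parameters H ∈ (0,1) and K ∈ (0,1), the function h(y) = y^{2HK} + (y−1)^{2HK} − 2^{1−K}(y^{2H} + (y−1)^{2H})^K converges to 0 as y → ∞. -/
open Filter Set

set_option maxHeartbeats 1000000

/-- Mean value theorem for `rpow`. -/
lemma rpow_mvt {x y : ℝ} (p : ℝ) (hx : 0 < x) (hxy : x < y) :
    ∃ c, x < c ∧ c < y ∧ y ^ p - x ^ p = p * c ^ (p - 1) * (y - x) := by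
  obtain ⟨c, hc, hc'⟩ := exists_hasDerivAt_eq_slope (fun z : ℝ => z ^ p)
    (fun z : ℝ => p * z ^ (p - 1)) hxy
    (ContinuousOn.rpow_const continuousOn_id fun z hz =>
      Or.inl (hx.trans_le hz.1).ne')
    (fun z hz => Real.hasDerivAt_rpow_const (Or.inl (hx.trans hz.1).ne'))
  refine ⟨c, hc.1, hc.2, ?_⟩
  have hyx : y - x ≠ 0 := by linarith [hxy]
  field_simp at hc'
  linarith [hc']

/-- Key inequality: quantitative strict concavity bound for `x ^ K`. -/
lemma key_bound {b a K : ℝ} (hb : 0 < b) (hba : b < a) (hK0 : 0 < K) (hK1 : K < 1) :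
    0 ≤ 2 * ((a + b) / 2) ^ K - a ^ K - b ^ K ∧
    2 * ((a + b) / 2) ^ K - a ^ K - b ^ K ≤ 2 * K * (1 - K) * b ^ (K - 2) * ((a - b) / 2) ^ 2 := by
  set m := (a + b) / 2 with hm
  have hbm : b < m := by simp only [hm]; linarith
  have hma : m < a := by simp only [hm]; linarith
  have hmpos : 0 < m := hb.trans hbm
  obtain ⟨c1, hc1b, hc1m, h1⟩ := rpow_mvt K hb hbm
  obtain ⟨c2, hc2m, hc2a, h2⟩ := rpow_mvt K hmpos hma
  have hc1pos : 0 < c1 := hb.trans hc1b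
  have hc2pos : 0 < c2 := hmpos.trans hc2m
  have hmb : m - b = (a - b) / 2 := by simp only [hm]; ring
  have ham : a - m = (a - b) / 2 := by simp only [hm]; ring
  have hd : 0 < (a - b) / 2 := by linarith
  -- c2^(K-1) ≤ c1^(K-1)
  have hcc : c2 ^ (K - 1) ≤ c1 ^ (K - 1) :=
    Real.rpow_le_rpow_of_nonpos hc1pos (by linarith) (by linarith)
  -- c1^(K-1) ≤ b^(K-1), a^(K-1) ≤ c2^(K-1)
  have hcb : c1 ^ (K - 1) ≤ b ^ (K - 1) :=
    Real.rpow_le_rpow_of_nonpos hb hc1b.le (by linarith)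
  have hac : a ^ (K - 1) ≤ c2 ^ (K - 1) :=
    Real.rpow_le_rpow_of_nonpos hc2pos hc2a.le (by linarith)
  -- b^(K-1) - a^(K-1) ≤ (1-K) * b^(K-2) * (a-b)
  obtain ⟨c3, hc3b, hc3a, h3⟩ := rpow_mvt (K - 1) hb hba
  have hc3pos : 0 < c3 := hb.trans hc3b
  have hc3 : c3 ^ (K - 1 - 1) ≤ b ^ (K - 1 - 1) :=
    Real.rpow_le_rpow_of_nonpos hb hc3b.le (by linarith)
  have hba' : b ^ (K - 1) - a ^ (K - 1) ≤ (1 - K) * b ^ (K - 2) * (a - b) := by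
    have : b ^ (K - 1) - a ^ (K - 1) = (1 - K) * c3 ^ (K - 2) * (a - b) := by
      have : K - 1 - 1 = K - 2 := by ring
      rw [this] at h3; linarith [h3]
    rw [this]
    have h4 : c3 ^ (K - 2) ≤ b ^ (K - 2) := by
      have : K - 1 - 1 = K - 2 := by ring
      rwa [this] at hc3
    nlinarith [mul_le_mul_of_nonneg_left (mul_le_mul_of_nonneg_right h4
      (by linarith : (0:ℝ) ≤ a - b)) (by linarith : (0:ℝ) ≤ 1 - K)]
  constructor
  · rw [hmb] at h1; rw [ham] at h2
    nlinarith [mul_nonneg (mul_nonneg hK0.le hd.le) (sub_nonneg.mpr hcc), h1, h2]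
  · rw [hmb] at h1; rw [ham] at h2
    have key : 2 * m ^ K - a ^ K - b ^ K = K * ((a - b) / 2) * (c1 ^ (K - 1) - c2 ^ (K - 1)) := by
      linear_combination h1 - h2
    rw [key]
    have step : c1 ^ (K - 1) - c2 ^ (K - 1) ≤ (1 - K) * b ^ (K - 2) * (a - b) := by
      linarith [hcb, hac, hba']
    nlinarith [mul_le_mul_of_nonneg_left step (mul_nonneg hK0.le hd.le)]

/-- For `H ∈ (0,1)`, `K ∈ (0,1)`, the function
`h(y) = y^{2HK} + (y-1)^{2HK} - (2/2^K)(y^{2H} + (y-1)^{2H})^K` tends to `0` as `y → ∞`. -/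
theorem bifBm_h_tendsto_zero (H K : ℝ) (hH : H ∈ Set.Ioo (0:ℝ) 1) (hK : K ∈ Set.Ioo (0:ℝ) 1) :
    Tendsto (fun y : ℝ =>
        y ^ (2*H*K) + (y - 1) ^ (2*H*K)
          - (2 / 2 ^ K) * (y ^ (2*H) + (y - 1) ^ (2*H)) ^ K)
      atTop (nhds 0) := by
  obtain ⟨hH0, hH1⟩ := hH
  obtain ⟨hK0, hK1⟩ := hK
  have hexp : 2*H*K - 2 < 0 := by nlinarith
  have lim : Tendsto (fun y : ℝ => -(128 * y ^ (2*H*K - 2))) atTop (nhds 0) := by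
    have h0 : (0:ℝ) < 2 - 2*H*K := by linarith
    have := (tendsto_rpow_neg_atTop h0).const_mul (128:ℝ)
    have heq : -(2 - 2*H*K) = 2*H*K - 2 := by ring
    rw [heq] at this
    simpa using this.neg
  refine tendsto_of_tendsto_of_tendsto_of_le_of_le' lim tendsto_const_nhds ?_ ?_
  · -- lower bound eventually
    filter_upwards [eventually_ge_atTop (2:ℝ)] with y hy
    have hy1 : (1:ℝ) ≤ y - 1 := by linarith
    have hy1p : (0:ℝ) < y - 1 := by linarith
    have hyp : (0:ℝ) < y := by linarith
    set a := y ^ (2*H) with ha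
    set b := (y - 1) ^ (2*H) with hbdef
    have hb : 0 < b := Real.rpow_pos_of_pos hy1p _
    have hba : b < a := Real.rpow_lt_rpow hy1p.le (by linarith) (by linarith)
    have hrw1 : y ^ (2*H*K) = a ^ K := by
      rw [ha, ← Real.rpow_mul hyp.le]
    have hrw2 : (y - 1) ^ (2*H*K) = b ^ K := by
      rw [hbdef, ← Real.rpow_mul hy1p.le]
    have hrw3 : (2 / 2 ^ K) * (a + b) ^ K = 2 * ((a + b) / 2) ^ K := by
      rw [Real.div_rpow (by positivity) (by norm_num : (0:ℝ) ≤ 2)]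
      have h2K : (0:ℝ) < (2:ℝ) ^ K := Real.rpow_pos_of_pos (by norm_num) K
      field_simp
    obtain ⟨_, hub⟩ := key_bound hb hba hK0 hK1
    -- bound a - b
    obtain ⟨c, hcb, hca, hmvt⟩ := rpow_mvt (2*H) hy1p (by linarith : y - 1 < y)
    have hcpos : 0 < c := hy1p.trans hcb
    have habd : a - b ≤ 4 * y ^ (2*H - 1) := by
      have hab : a - b = 2*H * c ^ (2*H - 1) := by
        rw [ha, hbdef]; rw [hmvt]; ring
      have hcle : c ^ (2*H - 1) ≤ 2 * y ^ (2*H - 1) := by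
        rcases le_or_gt 0 (2*H - 1) with h | h
        · have h1 : c ^ (2*H - 1) ≤ y ^ (2*H - 1) :=
            Real.rpow_le_rpow hcpos.le hca.le h
          have h2 : 0 ≤ y ^ (2*H - 1) := (Real.rpow_pos_of_pos hyp _).le
          linarith
        · have hy2 : y / 2 ≤ c := by linarith [hcb]
          have h1 : c ^ (2*H - 1) ≤ (y / 2) ^ (2*H - 1) :=
            Real.rpow_le_rpow_of_nonpos (by linarith) hy2 h.le
          have h2 : (y / 2) ^ (2*H - 1) = y ^ (2*H - 1) / 2 ^ (2*H - 1) :=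
            Real.div_rpow hyp.le (by norm_num) _
          have h3 : (2:ℝ) ^ (-1:ℝ) ≤ 2 ^ (2*H - 1) :=
            Real.rpow_le_rpow_of_exponent_le (by norm_num) (by linarith)
          have h4 : (2:ℝ) ^ (-1:ℝ) = 1/2 := by
            rw [Real.rpow_neg_one]; norm_num
          have h5 : (1:ℝ)/2 ≤ 2 ^ (2*H - 1) := by rw [← h4]; exact h3
          have h6 : 0 < y ^ (2*H - 1) := Real.rpow_pos_of_pos hyp _
          have h7 : y ^ (2*H - 1) / 2 ^ (2*H - 1) ≤ y ^ (2*H - 1) / (1/2) := by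
            apply div_le_div_of_nonneg_left h6.le (by norm_num) h5
          calc c ^ (2*H - 1) ≤ y ^ (2*H - 1) / 2 ^ (2*H - 1) := by rw [← h2]; exact h1
            _ ≤ y ^ (2*H - 1) / (1/2) := h7
            _ = 2 * y ^ (2*H - 1) := by ring
      rw [hab]
      nlinarith [hcle, Real.rpow_pos_of_pos hcpos (2*H - 1),
        Real.rpow_pos_of_pos hyp (2*H - 1), hH0, hH1]
    -- bound b^(K-2)
    have hbK2 : b ^ (K - 2) ≤ 16 * y ^ (2*H*(K - 2)) := by
      have h1 : b ^ (K - 2) = (y - 1) ^ (2*H*(K - 2)) := by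
        rw [hbdef, ← Real.rpow_mul hy1p.le]
      have hy2 : y / 2 ≤ y - 1 := by linarith
      have h2 : (y - 1) ^ (2*H*(K - 2)) ≤ (y / 2) ^ (2*H*(K - 2)) :=
        Real.rpow_le_rpow_of_nonpos (by linarith) hy2 (by nlinarith)
      have h3 : (y / 2) ^ (2*H*(K - 2)) = y ^ (2*H*(K - 2)) / 2 ^ (2*H*(K - 2)) :=
        Real.div_rpow hyp.le (by norm_num) _
      have h4 : (2:ℝ) ^ (-4:ℝ) ≤ 2 ^ (2*H*(K - 2)) :=
        Real.rpow_le_rpow_of_exponent_le (by norm_num) (by nlinarith)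
      have h5 : (2:ℝ) ^ (-4:ℝ) = 1/16 := by
        rw [show (-4:ℝ) = ((-4:ℤ):ℝ) by norm_num, Real.rpow_intCast]; norm_num
      have h6 : 0 < y ^ (2*H*(K - 2)) := Real.rpow_pos_of_pos hyp _
      have h7 : y ^ (2*H*(K - 2)) / 2 ^ (2*H*(K - 2)) ≤ y ^ (2*H*(K - 2)) / (1/16) := by
        apply div_le_div_of_nonneg_left h6.le (by norm_num) (by rw [← h5]; exact h4)
      rw [h1]
      calc (y - 1) ^ (2*H*(K - 2)) ≤ y ^ (2*H*(K - 2)) / 2 ^ (2*H*(K - 2)) := by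
            rw [← h3]; exact h2
        _ ≤ y ^ (2*H*(K - 2)) / (1/16) := h7
        _ = 16 * y ^ (2*H*(K - 2)) := by ring
    -- combine exponents
    have hd0 : 0 < a - b := by linarith
    have hyA : 0 < y ^ (2*H - 1) := Real.rpow_pos_of_pos hyp _
    have hyB : 0 < y ^ (2*H*(K - 2)) := Real.rpow_pos_of_pos hyp _
    have hbK2pos : 0 < b ^ (K - 2) := Real.rpow_pos_of_pos hb _
    have hprod : y ^ (2*H*(K - 2)) * (y ^ (2*H - 1)) ^ 2 = y ^ (2*H*K - 2) := by
      rw [sq, ← Real.rpow_add hyp, ← Real.rpow_add hyp]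
      congr 1
      ring
    have hcomb : 2 * K * (1 - K) * b ^ (K - 2) * ((a - b) / 2) ^ 2 ≤ 128 * y ^ (2*H*K - 2) := by
      have hsq : ((a - b) / 2) ^ 2 ≤ 4 * (y ^ (2*H - 1)) ^ 2 := by
        have hh : (a - b) / 2 ≤ 2 * y ^ (2*H - 1) := by linarith
        nlinarith [hh, hd0, hyA]
      have e1 : 2 * K * (1 - K) * b ^ (K - 2) ≤ 2 * (16 * y ^ (2*H*(K - 2))) := by
        have e0 : 2 * K * (1 - K) * b ^ (K - 2) ≤ 2 * b ^ (K - 2) := by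
          nlinarith [mul_nonneg (by nlinarith : (0:ℝ) ≤ 2 - 2*K*(1 - K)) hbK2pos.le]
        linarith [hbK2]
      calc 2 * K * (1 - K) * b ^ (K - 2) * ((a - b) / 2) ^ 2
          ≤ 2 * (16 * y ^ (2*H*(K - 2))) * (4 * (y ^ (2*H - 1)) ^ 2) :=
            mul_le_mul e1 hsq (sq_nonneg _) (by positivity)
        _ = 128 * (y ^ (2*H*(K - 2)) * (y ^ (2*H - 1)) ^ 2) := by ring
        _ = 128 * y ^ (2*H*K - 2) := by rw [hprod]
    have := hub.trans hcomb
    rw [hrw1, hrw2, hrw3]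
    linarith
  · -- upper bound : h ≤ 0 eventually
    filter_upwards [eventually_ge_atTop (2:ℝ)] with y hy
    have hy1p : (0:ℝ) < y - 1 := by linarith
    have hyp : (0:ℝ) < y := by linarith
    set a := y ^ (2*H) with ha
    set b := (y - 1) ^ (2*H) with hbdef
    have hb : 0 < b := Real.rpow_pos_of_pos hy1p _
    have hba : b < a := Real.rpow_lt_rpow hy1p.le (by linarith) (by linarith)
    have hrw1 : y ^ (2*H*K) = a ^ K := by rw [ha, ← Real.rpow_mul hyp.le]
    have hrw2 : (y - 1) ^ (2*H*K) = b ^ K := by rw [hbdef, ← Real.rpow_mul hy1p.le]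
    have hrw3 : (2 / 2 ^ K) * (a + b) ^ K = 2 * ((a + b) / 2) ^ K := by
      rw [Real.div_rpow (by positivity) (by norm_num : (0:ℝ) ≤ 2)]
      have h2K : (0:ℝ) < (2:ℝ) ^ K := Real.rpow_pos_of_pos (by norm_num) K
      field_simp
    obtain ⟨hlb, _⟩ := key_bound hb hba hK0 hK1
    rw [hrw1, hrw2, hrw3]
    linarith
end

section
/- If H ∈ (0,1), K ∈ (0,1) and 2HK = 1, then y·h(y) converges to (1−2H)/4 as y → ∞. -/
/-!
Put `a = 2H`, so that `aK = 1`. Then `(u, v) ↦ u + v - 2 ((u^a + v^a)/2)^K` (twice the arithmetic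
mean minus twice the power mean of order `a`) is homogeneous of degree one, and with
`s = 1 - 1/y → 1` we get `y · h(y) = g(s) / (s - 1)^2` for `g(s) = 1 + s - 2 ((1 + s^a)/2)^K`.
Since `g(1) = g'(1) = 0` and `g''(1) = (1 - a)/2`, L'Hôpital's rule gives the limit `(1 - a)/4`.
-/

open Filter Topology

theorem tendsto_div_sub_sq_of_hasDerivAt {f f' : ℝ → ℝ} {a c : ℝ}
    (hf : ∀ᶠ x in 𝓝 a, HasDerivAt f (f' x) x) (hfa : f a = 0) (hf'a : f' a = 0)
    (hf' : HasDerivAt f' c a) :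
    Tendsto (fun x => f x / (x - a) ^ 2) (𝓝[≠] a) (𝓝 (c / 2)) := by
  have hg (x : ℝ) : HasDerivAt (fun x => (x - a) ^ 2) (2 * (x - a)) x := by
    simpa using ((hasDerivAt_id x).sub_const a).fun_pow 2
  refine HasDerivAt.lhopital_zero_nhdsNE (eventually_nhdsWithin_of_eventually_nhds hf)
    (Eventually.of_forall hg) ?_ ?_ ?_ ?_
  · filter_upwards [self_mem_nhdsWithin] with x hx
    exact mul_ne_zero two_ne_zero (sub_ne_zero.2 hx)
  · simpa [hfa] using hf.self_of_nhds.continuousAt.tendsto.mono_left nhdsWithin_le_nhds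
  · simpa using (hg a).continuousAt.tendsto.mono_left nhdsWithin_le_nhds
  · refine ((hasDerivAt_iff_tendsto_slope.1 hf').div_const 2).congr' ?_
    filter_upwards [self_mem_nhdsWithin] with x hx
    rw [slope_def_field, hf'a, sub_zero, div_div, mul_comm]

noncomputable def powerMeanGap (a K s : ℝ) : ℝ :=
  1 + s - 2 * ((1 + s ^ a) / 2) ^ K

section PowerMeanGap

variable {a K : ℝ}

theorem hasDerivAt_powerMeanGap (haK : a * K = 1) {s : ℝ} (hs : 0 < s) :
    HasDerivAt (powerMeanGap a K) (1 - s ^ (a - 1) * ((1 + s ^ a) / 2) ^ (K - 1)) s := by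
  have hmean : 0 < (1 + s ^ a) / 2 := by positivity
  have hpow := (((Real.hasDerivAt_rpow_const (p := a) (Or.inl hs.ne')).const_add 1).div_const
    2).rpow_const (p := K) (Or.inl hmean.ne')
  refine (((hasDerivAt_id' s).const_add 1).sub (hpow.const_mul 2)).congr_deriv ?_
  linear_combination -(s ^ (a - 1) * ((1 + s ^ a) / 2) ^ (K - 1)) * haK

theorem hasDerivAt_deriv_powerMeanGap_one (haK : a * K = 1) :
    HasDerivAt (fun s => 1 - s ^ (a - 1) * ((1 + s ^ a) / 2) ^ (K - 1)) ((1 - a) / 2) 1 := by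
  have hpow := (((Real.hasDerivAt_rpow_const (p := a) (Or.inl one_ne_zero)).const_add 1).div_const
    2).rpow_const (p := K - 1) (by norm_num)
  refine (((Real.hasDerivAt_rpow_const (p := a - 1) (Or.inl one_ne_zero)).fun_mul
    hpow).const_sub 1).congr_deriv ?_
  norm_num only [Real.one_rpow]
  linear_combination -haK / 2

theorem tendsto_powerMeanGap_div_sq (haK : a * K = 1) :
    Tendsto (fun s => powerMeanGap a K s / (s - 1) ^ 2) (𝓝[≠] 1) (𝓝 ((1 - a) / 4)) := by
  have h := tendsto_div_sub_sq_of_hasDerivAt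
    ((lt_mem_nhds one_pos).mono fun s hs => hasDerivAt_powerMeanGap haK hs)
    (by norm_num [powerMeanGap]) (by norm_num) (hasDerivAt_deriv_powerMeanGap_one haK)
  rwa [div_div, show (2 : ℝ) * 2 = 4 by norm_num] at h

theorem mul_add_sub_rpow_eq_powerMeanGap (haK : a * K = 1) {y : ℝ} (hy : 1 ≤ y) :
    y * (y ^ (a * K) + (y - 1) ^ (a * K) - 2 / 2 ^ K * (y ^ a + (y - 1) ^ a) ^ K)
      = powerMeanGap a K (1 - y⁻¹) / ((1 - y⁻¹) - 1) ^ 2 := by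
  have hy0 : 0 < y := by linarith
  have hya : 0 < y ^ a := Real.rpow_pos_of_pos hy0 a
  have hs : 1 - y⁻¹ = (y - 1) / y := by field_simp
  have hmean : (1 + ((y - 1) / y) ^ a) / 2 = (y ^ a + (y - 1) ^ a) / 2 / y ^ a := by
    rw [Real.div_rpow (by linarith) hy0.le]
    field_simp
  have hyaK : (y ^ a) ^ K = y := by rw [← Real.rpow_mul hy0.le, haK, Real.rpow_one]
  rw [powerMeanGap, hs, hmean, Real.div_rpow (by positivity) hya.le, hyaK,
    Real.div_rpow (by positivity) zero_le_two, haK, Real.rpow_one, Real.rpow_one]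
  field_simp
  ring

end PowerMeanGap

theorem bifBm_y_mul_h_tendsto_general (H K : ℝ) (hHK : 2*H*K = 1) :
    Tendsto (fun y : ℝ =>
        y * (y ^ (2*H*K) + (y - 1) ^ (2*H*K)
          - (2 / 2 ^ K) * (y ^ (2*H) + (y - 1) ^ (2*H)) ^ K))
      atTop (nhds ((1 - 2*H) / 4)) := by
  have hs : Tendsto (fun y : ℝ => 1 - y⁻¹) atTop (𝓝[≠] 1) := by
    refine tendsto_nhdsWithin_iff.2 ⟨?_, ?_⟩
    · simpa using (tendsto_inv_atTop_zero (𝕜 := ℝ)).const_sub 1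
    · filter_upwards [eventually_gt_atTop 0] with y hy
      simpa using hy.ne'
  refine ((tendsto_powerMeanGap_div_sq hHK).comp hs).congr' ?_
  filter_upwards [eventually_ge_atTop 1] with y hy
  exact (mul_add_sub_rpow_eq_powerMeanGap hHK hy).symm

/-- For `H ∈ (0,1)`, `K ∈ (0,1)` with `2HK = 1`, `y · h(y) → (1 - 2H)/4` as `y → ∞`,
where `h(y) = y^{2HK} + (y-1)^{2HK} - (2/2^K)(y^{2H} + (y-1)^{2H})^K`. -/
theorem bifBm_y_mul_h_tendsto (H K : ℝ) (hH : H ∈ Set.Ioo (0:ℝ) 1) (hK : K ∈ Set.Ioo (0:ℝ) 1)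
    (hHK : 2*H*K = 1) :
    Tendsto (fun y : ℝ =>
        y * (y ^ (2*H*K) + (y - 1) ^ (2*H*K)
          - (2 / 2 ^ K) * (y ^ (2*H) + (y - 1) ^ (2*H)) ^ K))
      atTop (nhds ((1 - 2*H) / 4)) :=
  bifBm_y_mul_h_tendsto_general H K hHK
end

section
/- If H ∈ (0,1), K ∈ (0,1) and 2HK = 1, then there exists a constant C > 0 such that |h(j)| ≤ C/j for every integer j ≥ 1. -/
open Real Set

/-- Mean value theorem for `rpow` on a positive interval. -/
lemma mvt_rpow {x y : ℝ} (p : ℝ) (hx : 0 < x) (hxy : x < y) :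
    ∃ ξ ∈ Set.Ioo x y, y ^ p - x ^ p = p * ξ ^ (p - 1) * (y - x) := by
  obtain ⟨c, hc, hc'⟩ := exists_hasDerivAt_eq_slope (fun t : ℝ => t ^ p)
    (fun t : ℝ => p * t ^ (p - 1)) hxy
    (fun t ht => ((Real.continuousAt_rpow_const t p
      (Or.inl (ne_of_gt (lt_of_lt_of_le hx ht.1)))).continuousWithinAt))
    (fun t ht => Real.hasDerivAt_rpow_const (Or.inl (ne_of_gt (hx.trans ht.1))))
  refine ⟨c, hc, ?_⟩
  have hne : y - x ≠ 0 := by linarith [hxy]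
  field_simp at hc'
  linarith [hc']

/-- Quantitative midpoint concavity gap for `t ↦ t^K`. -/
lemma concave_gap {K a b : ℝ} (hK0 : 0 < K) (hK1 : K < 1) (hb : 0 < b) (hba : b < a) :
    a ^ K + b ^ K ≤ 2 * ((a + b) / 2) ^ K ∧
    2 * ((a + b) / 2) ^ K - a ^ K - b ^ K ≤ K * (1 - K) / 2 * b ^ (K - 2) * (a - b) ^ 2 := by
  have ha : 0 < a := hb.trans hba
  have hbm : b < (a + b) / 2 := by linarith
  have hma : (a + b) / 2 < a := by linarith
  constructor
  · have hcc := (Real.concaveOn_rpow hK0.le hK1.le).2 (Set.mem_Ici.mpr ha.le)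
      (Set.mem_Ici.mpr hb.le) (by norm_num : (0:ℝ) ≤ 1/2) (by norm_num : (0:ℝ) ≤ 1/2)
      (by norm_num)
    simp only [smul_eq_mul] at hcc
    have hmid : (1/2 : ℝ) * a + 1/2 * b = (a + b) / 2 := by ring
    rw [hmid] at hcc
    linarith
  · obtain ⟨ξ₁, hξ₁, h1⟩ := mvt_rpow K hb hbm
    obtain ⟨ξ₂, hξ₂, h2⟩ := mvt_rpow K (hb.trans hbm) hma
    obtain ⟨ξ₃, hξ₃, h3⟩ := mvt_rpow (K - 1) hb hba
    have e1 : ξ₁ ^ (K - 1) ≤ b ^ (K - 1) :=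
      Real.rpow_le_rpow_of_nonpos hb hξ₁.1.le (by linarith)
    have e2 : a ^ (K - 1) ≤ ξ₂ ^ (K - 1) :=
      Real.rpow_le_rpow_of_nonpos (hb.trans (hbm.trans hξ₂.1)) hξ₂.2.le (by linarith)
    have e3 : ξ₃ ^ (K - 2) ≤ b ^ (K - 2) :=
      Real.rpow_le_rpow_of_nonpos hb hξ₃.1.le (by linarith)
    have hab : 0 < a - b := by linarith
    have h3' : a ^ (K - 1) - b ^ (K - 1) = (K - 1) * ξ₃ ^ (K - 2) * (a - b) := by
      have : K - 1 - 1 = K - 2 := by ring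
      rwa [this] at h3
    have hd : (0:ℝ) ≤ K * ((a - b) / 2) := by
      apply mul_nonneg hK0.le; linarith
    have hA : 2 * ((a + b) / 2) ^ K - a ^ K - b ^ K
        ≤ K * ((a - b) / 2) * (b ^ (K - 1) - a ^ (K - 1)) := by
      nlinarith [mul_le_mul_of_nonneg_left e1 hd, mul_le_mul_of_nonneg_left e2 hd]
    have hB : b ^ (K - 1) - a ^ (K - 1) ≤ (1 - K) * b ^ (K - 2) * (a - b) := by
      nlinarith [mul_le_mul_of_nonneg_left e3
        (mul_nonneg (by linarith : (0:ℝ) ≤ 1 - K) hab.le)]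
    have hC := mul_le_mul_of_nonneg_left hB hd
    nlinarith [hA, hC]

/-- For `H ∈ (0,1)`, `K ∈ (0,1)` with `2HK = 1`, there is `C > 0` with `|h(j)| ≤ C/j` for
every integer `j ≥ 1`, where `h(y) = y^{2HK} + (y-1)^{2HK} - (2/2^K)(y^{2H} + (y-1)^{2H})^K`. -/
theorem bifBm_h_bound (H K : ℝ) (hH : H ∈ Set.Ioo (0:ℝ) 1) (hK : K ∈ Set.Ioo (0:ℝ) 1)
    (hHK : 2*H*K = 1) :
    ∃ C : ℝ, 0 < C ∧ ∀ j : ℕ, 1 ≤ j →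
      |(j : ℝ) ^ (2*H*K) + ((j : ℝ) - 1) ^ (2*H*K)
          - (2 / 2 ^ K) * ((j : ℝ) ^ (2*H) + ((j : ℝ) - 1) ^ (2*H)) ^ K| ≤ C / j := by
  obtain ⟨hH0, hH1⟩ := hH
  obtain ⟨hK0, hK1⟩ := hK
  have h1K : (0:ℝ) < 1 - K := by linarith
  set C₀ : ℝ := K * (1 - K) * 2 * H ^ 2 * 2 ^ (4*H - 1) with hC₀
  have hC₀pos : 0 < C₀ := by
    rw [hC₀]; positivity
  refine ⟨C₀ + 2, by positivity, ?_⟩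
  intro j hj
  have h2H : 1 < 2 * H := by
    by_contra hcon
    push_neg at hcon
    have := mul_le_mul_of_nonneg_right hcon hK0.le
    rw [hHK, one_mul] at this
    linarith
  rcases eq_or_lt_of_le hj with hj1 | hj2
  · -- case j = 1
    have hjr : (j:ℝ) = 1 := by rw [← hj1]; norm_num
    rw [hjr]
    have h0 : (1:ℝ) - 1 = 0 := by norm_num
    rw [h0, Real.one_rpow, Real.zero_rpow (by rw [hHK]; norm_num),
      Real.zero_rpow (by positivity : 2*H ≠ 0)]
    simp only [add_zero, Real.one_rpow, div_one]
    have h2K1 : (1:ℝ) ≤ 2 ^ K := Real.one_le_rpow (by norm_num) hK0.le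
    have h2K2 : (2:ℝ) ^ K ≤ 2 := by
      have := Real.rpow_le_rpow_of_exponent_le (by norm_num : (1:ℝ) ≤ 2) hK1.le
      rwa [Real.rpow_one] at this
    have ht1 : (1:ℝ) ≤ 2 / 2 ^ K := by
      rw [le_div_iff₀ (by linarith)]; linarith
    have ht2 : 2 / (2:ℝ) ^ K ≤ 2 := by
      rw [div_le_iff₀ (by linarith)]; nlinarith
    rw [abs_le]
    constructor <;> nlinarith
  · -- case j ≥ 2
    have hjr2 : (2:ℝ) ≤ (j:ℝ) := by exact_mod_cast hj2
    set jr : ℝ := (j:ℝ) with hjrdef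
    have hjr0 : 0 < jr := by linarith
    have hjm0 : 0 < jr - 1 := by linarith
    set a : ℝ := jr ^ (2*H) with hadef
    set b : ℝ := (jr - 1) ^ (2*H) with hbdef
    have hbpos : 0 < b := Real.rpow_pos_of_pos hjm0 _
    have hba : b < a := Real.rpow_lt_rpow hjm0.le (by linarith) (by linarith)
    have aK : a ^ K = jr := by
      rw [hadef, ← Real.rpow_mul hjr0.le, hHK, Real.rpow_one]
    have bK : b ^ K = jr - 1 := by
      rw [hbdef, ← Real.rpow_mul hjm0.le, hHK, Real.rpow_one]
    obtain ⟨hlow, hup⟩ := concave_gap hK0 hK1 hbpos hba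
    -- rewrite the target expression
    rw [hHK, Real.rpow_one, Real.rpow_one]
    have h2K : (0:ℝ) < 2 ^ K := Real.rpow_pos_of_pos (by norm_num) K
    have hrw : (2 / 2 ^ K) * (a + b) ^ K = 2 * ((a + b) / 2) ^ K := by
      rw [Real.div_rpow (by positivity) (by norm_num : (0:ℝ) ≤ 2)]
      field_simp
    rw [hrw]
    rw [aK, bK] at hlow hup
    -- bound `a - b`
    obtain ⟨ξ, hξ, hmvt⟩ := mvt_rpow (2*H) hjm0 (by linarith : jr - 1 < jr)
    have hξ0 : 0 < ξ := hjm0.trans hξ.1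
    have hd1 : a - b ≤ 2 * H * jr ^ (2*H - 1) := by
      have hmono : ξ ^ (2*H - 1) ≤ jr ^ (2*H - 1) :=
        Real.rpow_le_rpow hξ0.le hξ.2.le (by linarith)
      have : jr - (jr - 1) = 1 := by ring
      rw [this, mul_one] at hmvt
      calc a - b = 2*H * ξ ^ (2*H - 1) := hmvt
        _ ≤ 2 * H * jr ^ (2*H - 1) := by
            apply mul_le_mul_of_nonneg_left hmono (by linarith)
    -- bound `b ^ (K - 2)`
    have hd2 : b ^ (K - 2) ≤ jr ^ (1 - 4*H) * 2 ^ (4*H - 1) := by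
      have e1 : b ^ (K - 2) = (jr - 1) ^ (1 - 4*H) := by
        rw [hbdef, ← Real.rpow_mul hjm0.le]
        congr 1
        have : 2*H*(K-2) = 2*H*K - 4*H := by ring
        rw [this, hHK]
      have e2 : (jr - 1) ^ (1 - 4*H) ≤ (jr/2) ^ (1 - 4*H) :=
        Real.rpow_le_rpow_of_nonpos (by linarith) (by linarith) (by linarith)
      have e3 : (jr/2) ^ (1 - 4*H) = jr ^ (1 - 4*H) * 2 ^ (4*H - 1) := by
        rw [Real.div_rpow hjr0.le (by norm_num : (0:ℝ) ≤ 2)]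
        rw [div_eq_mul_inv, ← Real.rpow_neg (by norm_num : (0:ℝ) ≤ 2)]
        congr 2
        ring
      rw [e1, ← e3]
      exact e2
    -- combine
    have hab0 : (0:ℝ) ≤ a - b := by linarith
    have hKK : (0:ℝ) ≤ K * (1 - K) / 2 := by positivity
    have hsq : (a - b) ^ 2 ≤ (2 * H * jr ^ (2*H - 1)) ^ 2 :=
      pow_le_pow_left₀ hab0 hd1 2
    have hgap2 : K * (1 - K) / 2 * b ^ (K - 2) * (a - b) ^ 2
        ≤ K * (1 - K) / 2 * (jr ^ (1 - 4*H) * 2 ^ (4*H - 1)) * (2 * H * jr ^ (2*H - 1)) ^ 2 := by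
      apply mul_le_mul
      · exact mul_le_mul_of_nonneg_left hd2 hKK
      · exact hsq
      · positivity
      · positivity
    have hfin : K * (1 - K) / 2 * (jr ^ (1 - 4*H) * 2 ^ (4*H - 1)) * (2 * H * jr ^ (2*H - 1)) ^ 2
        = C₀ / jr := by
      have key : jr ^ (2*H - 1) * jr ^ (2*H - 1) * jr ^ (1 - 4*H) = jr ^ (-1:ℝ) := by
        rw [← Real.rpow_add hjr0, ← Real.rpow_add hjr0]
        congr 1
        ring
      rw [Real.rpow_neg_one] at key
      rw [hC₀, show K*(1-K)*2*H^2*(2:ℝ)^(4*H-1)/jr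
          = K*(1-K)*2*H^2*(2:ℝ)^(4*H-1)*jr⁻¹ from div_eq_mul_inv _ _, ← key]
      ring
    have hC0div : C₀ / jr ≤ (C₀ + 2) / jr := by
      exact (div_le_div_iff_of_pos_right hjr0).mpr (by linarith)
    rw [abs_of_nonpos (by linarith)]
    linarith [hgap2, hup, hfin.le, hC0div]
end

section
/- Let H ∈ (0,1), K ∈ (0,1] with 2HK > 1 and let t > 0. For n ≥ 1 set t_j = jt/n for j = 0,…,n. Then the sums S_n = Σ_{j=1}^{n} | 2^{−K}((t_j^{2H} + t_{j−1}^{2H})^K − (t_j − t_{j−1})^{2HK}) − t_{j−1}^{2HK} − (1/2)(t_j^{2HK} − t_{j−1}^{2HK}) | converge to 0 as n → ∞. -/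
/-!
With `d = t / n`, `a = (j - 1) ^ (2H)` and `b = j ^ (2H)`, homogeneity turns the `j`-th summand into
`d ^ (2HK) * |G(a, b) - 2 ^ (-K)|`, where `G(a, b) = ((a + b) / 2) ^ K - (a ^ K + b ^ K) / 2` is the
midpoint concavity gap of `x ↦ x ^ K`. Comparing `x ^ K` with its tangent lines at `a` and `b` gives
`0 ≤ G(a, b) ≤ K b ^ K (b - a) ^ 2 / (4ab)`, which is `O(j ^ (2HK - 2)) = O(1)` since `2HK ≤ 2`.
Hence `S_n ≤ 4 n (t / n) ^ (2HK)`, which tends to `0` because `2HK > 1`.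
-/

open Filter Topology Real

noncomputable def rpowMidpointGap (K a b : ℝ) : ℝ := ((a + b) / 2) ^ K - (a ^ K + b ^ K) / 2

lemma Real.rpow_add_le_add_mul_rpow_sub_one {a c K : ℝ} (ha : 0 < a) (hc : -a ≤ c) (hK₀ : 0 ≤ K)
    (hK₁ : K ≤ 1) : (a + c) ^ K ≤ a ^ K + K * a ^ (K - 1) * c := by
  have hca : -1 ≤ c / a := by rw [le_div_iff₀ ha]; linarith
  have hbern : (1 + c / a) ^ K ≤ 1 + K * (c / a) := rpow_one_add_le_one_add_mul_self hca hK₀ hK₁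
  calc (a + c) ^ K = a ^ K * (1 + c / a) ^ K := by
        rw [← mul_rpow ha.le (by linarith)]
        field_simp
    _ ≤ a ^ K * (1 + K * (c / a)) := by gcongr
    _ = a ^ K + K * a ^ (K - 1) * c := by rw [rpow_sub_one ha.ne']; field_simp

section

variable {K a b : ℝ}

lemma rpowMidpointGap_nonneg (ha : 0 ≤ a) (hb : 0 ≤ b) (hK₀ : 0 ≤ K) (hK₁ : K ≤ 1) :
    0 ≤ rpowMidpointGap K a b := by
  have h := (concaveOn_rpow hK₀ hK₁).2 (Set.mem_Ici.2 ha) (Set.mem_Ici.2 hb)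
    (by norm_num : (0 : ℝ) ≤ 1 / 2) (by norm_num : (0 : ℝ) ≤ 1 / 2) (by norm_num)
  rw [smul_eq_mul, smul_eq_mul, smul_eq_mul, smul_eq_mul,
    show 1 / 2 * a + 1 / 2 * b = (a + b) / 2 by ring] at h
  rw [rpowMidpointGap]
  linarith

lemma rpowMidpointGap_le_rpow (ha : 0 ≤ a) (hab : a ≤ b) (hK₀ : 0 ≤ K) :
    rpowMidpointGap K a b ≤ b ^ K := by
  have hm : ((a + b) / 2) ^ K ≤ b ^ K := rpow_le_rpow (by linarith) (by linarith) hK₀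
  rw [rpowMidpointGap]
  linarith [rpow_nonneg ha K, rpow_nonneg (ha.trans hab) K]

lemma rpowMidpointGap_le (ha : 0 < a) (hab : a ≤ b) (hK₀ : 0 ≤ K) (hK₁ : K ≤ 1) :
    rpowMidpointGap K a b ≤ K * b ^ K * (b - a) ^ 2 / (4 * a * b) := by
  have hb : 0 < b := ha.trans_le hab
  have tangent_a := rpow_add_le_add_mul_rpow_sub_one ha (c := (b - a) / 2) (by linarith) hK₀ hK₁
  have tangent_b := rpow_add_le_add_mul_rpow_sub_one hb (c := -((b - a) / 2)) (by linarith) hK₀ hK₁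
  have hslope : a ^ (K - 1) - b ^ (K - 1) ≤ b ^ K * (b - a) / (a * b) := by
    rw [rpow_sub_one ha.ne', rpow_sub_one hb.ne']
    have : a ^ K / a ≤ b ^ K / a := by gcongr
    calc a ^ K / a - b ^ K / b ≤ b ^ K / a - b ^ K / b := by linarith
      _ = b ^ K * (b - a) / (a * b) := by field_simp
  have hgap : rpowMidpointGap K a b ≤ K * (b - a) / 4 * (a ^ (K - 1) - b ^ (K - 1)) := by
    rw [rpowMidpointGap]
    rw [show a + (b - a) / 2 = (a + b) / 2 by ring] at tangent_a
    rw [show b + -((b - a) / 2) = (a + b) / 2 by ring] at tangent_b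
    linarith
  calc rpowMidpointGap K a b ≤ K * (b - a) / 4 * (a ^ (K - 1) - b ^ (K - 1)) := hgap
    _ ≤ K * (b - a) / 4 * (b ^ K * (b - a) / (a * b)) := by gcongr
    _ = K * b ^ K * (b - a) ^ 2 / (4 * a * b) := by field_simp

end

section

variable {q K j : ℝ}

lemma rpowMidpointGap_rpow_sub_one_le (hj : 1 ≤ j) (hq₀ : 0 ≤ q) (hq₂ : q ≤ 2) (hK₀ : 0 ≤ K)
    (hK₁ : K ≤ 1) : rpowMidpointGap K ((j - 1) ^ q) (j ^ q) ≤ 4 := by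
  have hj₀ : 0 < j := by linarith
  have hab : (j - 1) ^ q ≤ j ^ q := rpow_le_rpow (by linarith) (by linarith) hq₀
  have hbK : (j ^ q) ^ K ≤ j ^ 2 := by
    rw [← rpow_mul hj₀.le, ← rpow_two]
    exact rpow_le_rpow_of_exponent_le hj (by nlinarith)
  rcases le_total j 2 with hj₂ | hj₂
  · calc rpowMidpointGap K ((j - 1) ^ q) (j ^ q) ≤ (j ^ q) ^ K :=
          rpowMidpointGap_le_rpow (rpow_nonneg (by linarith) q) hab hK₀
      _ ≤ j ^ 2 := hbK
      _ ≤ 4 := by nlinarith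
  set a := (j - 1) ^ q
  set b := j ^ q
  have hb : 0 < b := rpow_pos_of_pos hj₀ q
  have hratio : (j - 1) ^ 2 * b ≤ j ^ 2 * a := by
    have hz : ((j - 1) / j) ^ (2 : ℝ) ≤ ((j - 1) / j) ^ q :=
      rpow_le_rpow_of_exponent_ge' (by positivity) (by rw [div_le_one hj₀]; linarith) hq₀ hq₂
    have ha_eq : ((j - 1) / j) ^ q * b = a := by
      rw [← mul_rpow (by positivity) hj₀.le, div_mul_cancel₀ _ hj₀.ne']
    rw [rpow_two, div_pow] at hz
    calc (j - 1) ^ 2 * b = j ^ 2 * ((j - 1) ^ 2 / j ^ 2 * b) := by field_simp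
      _ ≤ j ^ 2 * a := by rw [← ha_eq]; gcongr
  have ha : 0 < a := rpow_pos_of_pos (by linarith) q
  calc rpowMidpointGap K a b ≤ K * b ^ K * (b - a) ^ 2 / (4 * a * b) :=
        rpowMidpointGap_le ha hab hK₀ hK₁
    _ ≤ 4 := by
      rw [div_le_iff₀ (by positivity)]
      have hdiff : j * (b - a) ≤ 2 * b := by nlinarith
      have hb4 : b ≤ 4 * a := by
        have hj4 : j ^ 2 * b ≤ j ^ 2 * (4 * a) := by
          nlinarith [mul_le_mul_of_nonneg_right (by nlinarith : j ^ 2 ≤ 4 * (j - 1) ^ 2) hb.le]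
        exact le_of_mul_le_mul_left hj4 (by positivity)
      have hsq : j ^ 2 * (b - a) ^ 2 ≤ 16 * a * b := by
        nlinarith [mul_le_mul hdiff hdiff (by nlinarith) (by positivity)]
      have hKb : K * b ^ K ≤ j ^ 2 := by nlinarith [rpow_nonneg hb.le K]
      nlinarith [sq_nonneg (b - a)]

lemma abs_rpowMidpointGap_rpow_sub_one_sub_le (hj : 1 ≤ j) (hq₀ : 0 ≤ q) (hq₂ : q ≤ 2)
    (hK₀ : 0 ≤ K) (hK₁ : K ≤ 1) : |rpowMidpointGap K ((j - 1) ^ q) (j ^ q) - 2 ^ (-K)| ≤ 4 := by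
  have hgap₀ : 0 ≤ rpowMidpointGap K ((j - 1) ^ q) (j ^ q) :=
    rpowMidpointGap_nonneg (rpow_nonneg (by linarith) q) (rpow_nonneg (by linarith) q) hK₀ hK₁
  have hgap₄ := rpowMidpointGap_rpow_sub_one_le hj hq₀ hq₂ hK₀ hK₁
  have h2K₀ : 0 < (2 : ℝ) ^ (-K) := by positivity
  have h2K₁ : (2 : ℝ) ^ (-K) ≤ 1 := rpow_le_one_of_one_le_of_nonpos one_le_two (by linarith)
  rw [abs_le]
  constructor <;> linarith

lemma abs_sub_eq_rpow_mul_abs_rpowMidpointGap {d : ℝ} (hd : 0 ≤ d) (hj : 1 ≤ j) :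
    |2 ^ (-K) * (((j * d) ^ q + ((j - 1) * d) ^ q) ^ K - (j * d - (j - 1) * d) ^ (q * K))
        - ((j - 1) * d) ^ (q * K) - 1 / 2 * ((j * d) ^ (q * K) - ((j - 1) * d) ^ (q * K))|
      = d ^ (q * K) * |rpowMidpointGap K ((j - 1) ^ q) (j ^ q) - 2 ^ (-K)| := by
  have hj₀ : 0 ≤ j := by linarith
  have hj₁ : 0 ≤ j - 1 := by linarith
  have hsum : (j * d) ^ q + ((j - 1) * d) ^ q = ((j - 1) ^ q + j ^ q) * d ^ q := by
    rw [mul_rpow hj₀ hd, mul_rpow hj₁ hd]; ring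
  rw [← abs_of_nonneg (rpow_nonneg hd (q * K)), ← abs_mul]
  congr 1
  rw [hsum, mul_rpow (by positivity) (rpow_nonneg hd q),
    show j * d - (j - 1) * d = d by ring, mul_rpow hj₀ hd, mul_rpow hj₁ hd, rpow_mul hd,
    rpow_mul hj₀, rpow_mul hj₁, rpowMidpointGap, rpow_neg zero_le_two,
    div_rpow (by positivity) zero_le_two]
  ring

end

lemma tendsto_div_natCast_rpow_mul_natCast {t r : ℝ} (ht : 0 ≤ t) (hr : 1 < r) :
    Tendsto (fun n : ℕ => (t / n) ^ r * n) atTop (𝓝 0) := by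
  have hlim : Tendsto (fun n : ℕ => t ^ r * (n : ℝ) ^ (-(r - 1))) atTop (𝓝 (t ^ r * 0)) :=
    ((tendsto_rpow_neg_atTop (by linarith)).comp tendsto_natCast_atTop_atTop).const_mul _
  rw [mul_zero] at hlim
  refine hlim.congr' ?_
  filter_upwards [eventually_gt_atTop 0] with n hn
  have hn' : (0 : ℝ) < n := Nat.cast_pos.2 hn
  rw [div_rpow ht hn'.le, rpow_neg hn'.le, rpow_sub_one hn'.ne']
  field_simp

/-- For `H ∈ (0,1)`, `K ∈ (0,1]` with `2HK > 1` and `t > 0`, the sums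
`S_n = ∑_{j=1}^n |2^{-K}((t_j^{2H} + t_{j-1}^{2H})^K - (t_j - t_{j-1})^{2HK}) - t_{j-1}^{2HK}
- (1/2)(t_j^{2HK} - t_{j-1}^{2HK})|`, with `t_j = jt/n`, converge to `0` as `n → ∞`. -/
theorem bifBm_ito_correction_sums_tendsto_zero
    (H K : ℝ) (hH : H ∈ Set.Ioo (0:ℝ) 1) (hK : K ∈ Set.Ioc (0:ℝ) 1)
    (hHK : 1 < 2*H*K) (t : ℝ) (ht : 0 < t) :
    Tendsto (fun n : ℕ => ∑ j ∈ Finset.Icc 1 n,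
        |2 ^ (-K) * ((((j : ℝ) * t / n) ^ (2*H) + (((j : ℝ) - 1) * t / n) ^ (2*H)) ^ K
              - ((j : ℝ) * t / n - ((j : ℝ) - 1) * t / n) ^ (2*H*K))
          - (((j : ℝ) - 1) * t / n) ^ (2*H*K)
          - (1/2) * (((j : ℝ) * t / n) ^ (2*H*K) - (((j : ℝ) - 1) * t / n) ^ (2*H*K))|)
      atTop (nhds 0) := by
  obtain ⟨hH₀, hH₁⟩ := hH
  obtain ⟨hK₀, hK₁⟩ := hK
  have hbound := (tendsto_div_natCast_rpow_mul_natCast ht.le hHK).const_mul 4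
  rw [mul_zero] at hbound
  refine squeeze_zero (fun n => Finset.sum_nonneg fun j _ => abs_nonneg _) (fun n => ?_) hbound
  simp_rw [mul_div_assoc]
  calc _ = ∑ j ∈ Finset.Icc 1 n, (t / n) ^ (2 * H * K) *
          |rpowMidpointGap K (((j : ℝ) - 1) ^ (2 * H)) ((j : ℝ) ^ (2 * H)) - 2 ^ (-K)| :=
        Finset.sum_congr rfl fun j hj => abs_sub_eq_rpow_mul_abs_rpowMidpointGap (by positivity)
          (Nat.one_le_cast.2 (Finset.mem_Icc.1 hj).1)
    _ ≤ ∑ j ∈ Finset.Icc 1 n, (t / n) ^ (2 * H * K) * 4 := by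
        gcongr with j hj
        exact abs_rpowMidpointGap_rpow_sub_one_sub_le (Nat.one_le_cast.2 (Finset.mem_Icc.1 hj).1)
          (by linarith) (by linarith) hK₀.le hK₁
    _ = 4 * ((t / n) ^ (2 * H * K) * n) := by
        rw [Finset.sum_const, Nat.card_Icc, Nat.add_sub_cancel, nsmul_eq_mul]; ring
end

section
/- Let H ∈ (0,1), K ∈ (0,1) with 2HK = 1 and let t > 0. For n ≥ 1 set t_j = jt/n for j = 0,…,n. Then the sums E_n = Σ_{j=1}^{n} | 2^{−K}(t_j^{2H} + t_{j−1}^{2H})^K − (1/2)(t_j + t_{j−1}) | converge to 0 as n → ∞. -/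
open Filter Real

/-- Bernoulli lower bound: `x^p + p x^{p-1} c ≤ (x+c)^p` for `p ≥ 1`, `x > 0`, `c ≥ -x`. -/
lemma bern_ge {p x c : ℝ} (hp : 1 ≤ p) (hx : 0 < x) (hc : -x ≤ c) :
    x ^ p + p * x ^ (p - 1) * c ≤ (x + c) ^ p := by
  have hs : -1 ≤ c / x := by
    rw [neg_le, ← neg_div, div_le_one hx]; linarith
  have h := one_add_mul_self_le_rpow_one_add hs hp
  have hx0 : (0:ℝ) ≤ x := hx.le
  have h1 : (0:ℝ) ≤ 1 + c / x := by linarith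
  have hxc : x + c = x * (1 + c / x) := by field_simp
  have h2 : (x + c) ^ p = x ^ p * (1 + c / x) ^ p := by
    rw [hxc, Real.mul_rpow hx0 h1]
  have h3 : x ^ p * (1 + p * (c / x)) = x ^ p + p * x ^ (p - 1) * c := by
    have hh : x ^ (p - 1) = x ^ p / x := by
      rw [Real.rpow_sub hx, Real.rpow_one]
    rw [hh]; field_simp
  rw [h2, ← h3]
  exact mul_le_mul_of_nonneg_left h (Real.rpow_nonneg hx0 p)

/-- Bernoulli upper bound: `(x+c)^p ≤ x^p + p x^{p-1} c` for `0 ≤ p ≤ 1`, `x > 0`, `c ≥ -x`. -/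
lemma bern_le {p x c : ℝ} (hp0 : 0 ≤ p) (hp : p ≤ 1) (hx : 0 < x) (hc : -x ≤ c) :
    (x + c) ^ p ≤ x ^ p + p * x ^ (p - 1) * c := by
  have hs : -1 ≤ c / x := by
    rw [neg_le, ← neg_div, div_le_one hx]; linarith
  have h := rpow_one_add_le_one_add_mul_self hs hp0 hp
  have hx0 : (0:ℝ) ≤ x := hx.le
  have h1 : (0:ℝ) ≤ 1 + c / x := by linarith
  have hxc : x + c = x * (1 + c / x) := by field_simp
  have h2 : (x + c) ^ p = x ^ p * (1 + c / x) ^ p := by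
    rw [hxc, Real.mul_rpow hx0 h1]
  have h3 : x ^ p * (1 + p * (c / x)) = x ^ p + p * x ^ (p - 1) * c := by
    have hh : x ^ (p - 1) = x ^ p / x := by
      rw [Real.rpow_sub hx, Real.rpow_one]
    rw [hh]; field_simp
  rw [h2, ← h3]
  exact mul_le_mul_of_nonneg_left h (Real.rpow_nonneg hx0 p)

set_option maxHeartbeats 1000000 in
/-- Key per-term bound (unscaled). -/
lemma key_term {p K : ℝ} (hp1 : 1 < p) (hp2 : p < 2) (hK0 : 0 < K) (hpK : p * K = 1)
    {j : ℕ} (hj : 1 ≤ j) :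
    |2 ^ (-K) * ((j : ℝ) ^ p + ((j : ℝ) - 1) ^ p) ^ K - (1/2) * ((j : ℝ) + ((j : ℝ) - 1))|
      ≤ (j : ℝ) ^ (1 - p) := by
  have hK1 : K ≤ 1 := by nlinarith
  have hjR : (1:ℝ) ≤ (j : ℝ) := by exact_mod_cast hj
  have hm0 : (0:ℝ) < (j:ℝ) - 1/2 := by linarith
  have hb0 : (0:ℝ) < (j:ℝ) := by linarith
  have ha0 : (0:ℝ) ≤ (j:ℝ) - 1 := by linarith
  obtain ⟨m, hm⟩ : ∃ m : ℝ, m = (j:ℝ) - 1/2 := ⟨_, rfl⟩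
  obtain ⟨S, hS⟩ : ∃ S : ℝ, S = ((j:ℝ) ^ p + ((j:ℝ) - 1) ^ p) / 2 := ⟨_, rfl⟩
  rw [← hm] at hm0
  have hS0 : 0 ≤ S := by rw [hS]; positivity
  have hrw : 2 ^ (-K) * ((j : ℝ) ^ p + ((j : ℝ) - 1) ^ p) ^ K = S ^ K := by
    rw [hS, Real.div_rpow (by positivity) (by norm_num), Real.rpow_neg (by norm_num)]
    ring
  have hmean : (1/2 : ℝ) * ((j : ℝ) + ((j : ℝ) - 1)) = m := by rw [hm]; ring
  rw [hrw, hmean]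
  -- lower bound: m ≤ S^K
  have hmS : m ^ p ≤ S := by
    have hbm : m ^ p + p * m ^ (p-1) * (1/2) ≤ (j:ℝ) ^ p := by
      have h := bern_ge hp1.le hm0 (show -m ≤ (1/2:ℝ) by rw [hm]; linarith)
      have hmb : m + 1/2 = (j:ℝ) := by rw [hm]; ring
      rw [hmb] at h; exact h
    have ham : m ^ p + p * m ^ (p-1) * (-(1/2)) ≤ ((j:ℝ) - 1) ^ p := by
      have h := bern_ge hp1.le hm0 (show -m ≤ -(1/2:ℝ) by rw [hm]; linarith)
      have hma : m + -(1/2) = (j:ℝ) - 1 := by rw [hm]; ring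
      rw [hma] at h; exact h
    rw [hS]; nlinarith
  have hmpK : (m ^ p) ^ K = m := by
    rw [← Real.rpow_mul hm0.le, hpK, Real.rpow_one]
  have hlow : m ≤ S ^ K := by
    rw [← hmpK]
    exact Real.rpow_le_rpow (by positivity) hmS hK0.le
  have hjp0 : (0:ℝ) < (j:ℝ) ^ (1-p) := Real.rpow_pos_of_pos hb0 _
  rcases eq_or_lt_of_le hj with hj1 | hj2
  · -- j = 1
    subst hj1
    have hSval : S = 1/2 := by
      rw [hS]
      norm_num
      rw [Real.zero_rpow (by linarith)]
    have hSK : S ^ K ≤ 1 := by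
      rw [hSval]
      exact Real.rpow_le_one (by norm_num) (by norm_num) hK0.le
    have hmval : m = 1/2 := by rw [hm]; norm_num
    have hjone : ((1:ℕ):ℝ) ^ (1-p) = 1 := by norm_num
    rw [hjone, abs_le]
    constructor <;> linarith
  · -- j ≥ 2
    have h2j : (2:ℕ) ≤ j := hj2
    have ha1 : (1:ℝ) ≤ (j:ℝ) - 1 := by
      have : (2:ℝ) ≤ (j:ℝ) := by exact_mod_cast h2j
      linarith
    have ha0' : (0:ℝ) < (j:ℝ) - 1 := by linarith
    obtain ⟨ε, hε⟩ : ∃ e : ℝ, e = m ^ (1 - p) / 4 := ⟨_, rfl⟩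
    have hmε0 : 0 < m ^ (1-p) := Real.rpow_pos_of_pos hm0 _
    have hε0 : 0 < ε := by rw [hε]; positivity
    have hup : S ≤ m ^ p + p / 4 := by
      have h1 : (j:ℝ) ^ p + p * (j:ℝ) ^ (p-1) * (-(1/2)) ≤ m ^ p := by
        have h := bern_ge hp1.le hb0 (show -(j:ℝ) ≤ -(1/2:ℝ) by linarith)
        have hbm : (j:ℝ) + -(1/2) = m := by rw [hm]; ring
        rw [hbm] at h; exact h
      have h2 : ((j:ℝ)-1) ^ p + p * ((j:ℝ)-1) ^ (p-1) * (1/2) ≤ m ^ p := by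
        have h := bern_ge hp1.le ha0' (show -((j:ℝ)-1) ≤ (1/2:ℝ) by linarith)
        have ham : (j:ℝ) - 1 + 1/2 = m := by rw [hm]; ring
        rw [ham] at h; exact h
      have h3 : (j:ℝ) ^ (p-1) ≤ ((j:ℝ)-1) ^ (p-1) + 1 := by
        have h := bern_le (by linarith : (0:ℝ) ≤ p - 1) (by linarith : p - 1 ≤ 1) ha0'
          (show -((j:ℝ)-1) ≤ (1:ℝ) by linarith)
        have hba : (j:ℝ) - 1 + 1 = (j:ℝ) := by ring
        rw [hba] at h
        have h4 : ((j:ℝ)-1) ^ (p - 1 - 1) ≤ 1 :=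
          Real.rpow_le_one_of_one_le_of_nonpos ha1 (by linarith)
        have h5 : (0:ℝ) < ((j:ℝ)-1) ^ (p-1-1) := Real.rpow_pos_of_pos ha0' _
        nlinarith
      have hb1 : 0 < (j:ℝ) ^ (p-1) := Real.rpow_pos_of_pos hb0 _
      have ha1' : 0 < ((j:ℝ)-1) ^ (p-1) := Real.rpow_pos_of_pos ha0' _
      rw [hS]; nlinarith
    have hone : m ^ (p-1) * m ^ (1-p) = 1 := by
      rw [← Real.rpow_add hm0]; norm_num
    have hup2 : m ^ p + p / 4 ≤ (m + ε) ^ p := by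
      have h := bern_ge hp1.le hm0 (show -m ≤ ε by linarith)
      have heq : p * m ^ (p-1) * ε = p / 4 := by
        rw [hε]
        calc p * m ^ (p-1) * (m ^ (1-p) / 4) = p * (m ^ (p-1) * m ^ (1-p)) / 4 := by ring
          _ = p / 4 := by rw [hone]; ring
      rw [← heq]; exact h
    have hhigh : S ^ K ≤ m + ε := by
      have hmε : (0:ℝ) ≤ m + ε := by linarith
      calc S ^ K ≤ ((m + ε) ^ p) ^ K :=
            Real.rpow_le_rpow hS0 (hup.trans hup2) hK0.le
        _ = m + ε := by rw [← Real.rpow_mul hmε, hpK, Real.rpow_one]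
    have hεb : ε ≤ (j:ℝ) ^ (1-p) := by
      have hm2 : (j:ℝ)/2 ≤ m := by rw [hm]; linarith
      have h5 : m ^ (1-p) ≤ ((j:ℝ)/2) ^ (1-p) :=
        Real.rpow_le_rpow_of_nonpos (by positivity) hm2 (by linarith)
      have h7 : (1/2:ℝ) ≤ (2:ℝ)^(1-p) := by
        have : ((2:ℝ))^(-1:ℝ) ≤ (2:ℝ)^(1-p) :=
          Real.rpow_le_rpow_of_exponent_le (by norm_num) (by linarith)
        rwa [Real.rpow_neg_one, show ((2:ℝ))⁻¹ = 1/2 by norm_num] at this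
      have hmul : ((j:ℝ)/2) ^ (1-p) * (2:ℝ)^(1-p) = (j:ℝ)^(1-p) := by
        rw [← Real.mul_rpow (by positivity) (by norm_num)]
        norm_num
      have hpos : 0 < ((j:ℝ)/2) ^ (1-p) := Real.rpow_pos_of_pos (by positivity) _
      have h9 : ((j:ℝ)/2) ^ (1-p) ≤ 2 * (j:ℝ)^(1-p) := by
        nlinarith [mul_le_mul_of_nonneg_left h7 hpos.le]
      rw [hε]
      linarith
    rw [abs_le]
    constructor <;> linarith

/-- Telescoping bound on the sum of `j^(1-p)`. -/
lemma sum_rpow_bound {p : ℝ} (hp1 : 1 < p) (hp2 : p < 2) (n : ℕ) :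
    ∑ j ∈ Finset.Icc 1 n, (j : ℝ) ^ (1 - p) ≤ (n : ℝ) ^ (2 - p) / (2 - p) := by
  have hq0 : (0:ℝ) < 2 - p := by linarith
  induction n with
  | zero =>
    simp [Real.zero_rpow (show (2:ℝ) - p ≠ 0 by linarith)]
  | succ n ih =>
    rw [Finset.sum_Icc_succ_top (by omega : 1 ≤ n + 1)]
    have hx1 : (1:ℝ) ≤ ((n:ℝ) + 1) := by
      have : (0:ℝ) ≤ (n:ℝ) := Nat.cast_nonneg n
      linarith
    have hx0 : (0:ℝ) < (n:ℝ) + 1 := by positivity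
    have h := bern_le hq0.le (by linarith : 2 - p ≤ 1) hx0
      (show -((n:ℝ)+1) ≤ (-1:ℝ) by linarith)
    rw [show (n:ℝ) + 1 + -1 = (n:ℝ) by ring] at h
    rw [show (2:ℝ) - p - 1 = 1 - p by ring] at h
    -- h : (n:ℝ)^(2-p) ≤ ((n:ℝ)+1)^(2-p) + (2-p) * ((n:ℝ)+1)^(1-p) * (-1)
    have hcast : ((n + 1 : ℕ) : ℝ) = (n:ℝ) + 1 := by push_cast; ring
    rw [hcast]
    have h2 : ((n:ℝ)+1) ^ (1-p) ≤ (((n:ℝ)+1) ^ (2-p) - (n:ℝ) ^ (2-p)) / (2-p) := by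
      rw [le_div_iff₀ hq0]
      nlinarith
    have h3 : (((n:ℝ)+1) ^ (2-p) - (n:ℝ) ^ (2-p)) / (2-p)
        = ((n:ℝ)+1) ^ (2-p) / (2-p) - (n:ℝ) ^ (2-p) / (2-p) := by ring
    rw [h3] at h2
    linarith

/-- For `H ∈ (0,1)`, `K ∈ (0,1)` with `2HK = 1` and `t > 0`, the sums
`E_n = ∑_{j=1}^n |2^{-K}(t_j^{2H} + t_{j-1}^{2H})^K - (1/2)(t_j + t_{j-1})|`,
with `t_j = jt/n`, converge to `0` as `n → ∞`. -/
theorem bifBm_ito_correction_sums_tendsto_zero_crit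
    (H K : ℝ) (hH : H ∈ Set.Ioo (0:ℝ) 1) (hK : K ∈ Set.Ioo (0:ℝ) 1)
    (hHK : 2*H*K = 1) (t : ℝ) (ht : 0 < t) :
    Tendsto (fun n : ℕ => ∑ j ∈ Finset.Icc 1 n,
        |2 ^ (-K) * (((j : ℝ) * t / n) ^ (2*H) + (((j : ℝ) - 1) * t / n) ^ (2*H)) ^ K
          - (1/2) * ((j : ℝ) * t / n + ((j : ℝ) - 1) * t / n)|)
      atTop (nhds 0) := by
  obtain ⟨hH0, hH1⟩ := hH
  obtain ⟨hK0, hK1⟩ := hK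
  set p : ℝ := 2 * H with hp
  have hpK : p * K = 1 := hHK
  have hp0 : 0 < p := by rw [hp]; linarith
  have hp1 : 1 < p := by nlinarith
  have hp2 : p < 2 := by rw [hp]; linarith
  -- the dominating sequence
  set g : ℕ → ℝ := fun n => t / (2 - p) * (n : ℝ) ^ (1 - p) with hg
  have hE0 : ∀ n : ℕ, (0:ℝ) ≤ ∑ j ∈ Finset.Icc 1 n,
      |2 ^ (-K) * (((j : ℝ) * t / n) ^ p + (((j : ℝ) - 1) * t / n) ^ p) ^ K
        - (1/2) * ((j : ℝ) * t / n + ((j : ℝ) - 1) * t / n)| :=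
    fun n => Finset.sum_nonneg fun j _ => abs_nonneg _
  have hEg : ∀ n : ℕ, (∑ j ∈ Finset.Icc 1 n,
      |2 ^ (-K) * (((j : ℝ) * t / n) ^ p + (((j : ℝ) - 1) * t / n) ^ p) ^ K
        - (1/2) * ((j : ℝ) * t / n + ((j : ℝ) - 1) * t / n)|) ≤ g n := by
    intro n
    rcases Nat.eq_zero_or_pos n with rfl | hn
    · simp [hg, Real.zero_rpow (show (1:ℝ) - p ≠ 0 by linarith)]
    have hn0 : (0:ℝ) < (n:ℝ) := by exact_mod_cast hn
    have hδ : (0:ℝ) < t / n := div_pos ht hn0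
    have step : ∀ j ∈ Finset.Icc 1 n,
        |2 ^ (-K) * (((j : ℝ) * t / n) ^ p + (((j : ℝ) - 1) * t / n) ^ p) ^ K
          - (1/2) * ((j : ℝ) * t / n + ((j : ℝ) - 1) * t / n)|
        ≤ (t / n) * (j : ℝ) ^ (1 - p) := by
      intro j hjmem
      have hj : 1 ≤ j := (Finset.mem_Icc.mp hjmem).1
      have hjR : (1:ℝ) ≤ (j : ℝ) := by exact_mod_cast hj
      have hj0 : (0:ℝ) ≤ (j:ℝ) := by linarith
      have hj1 : (0:ℝ) ≤ (j:ℝ) - 1 := by linarith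
      have key : (((j:ℝ) * t / n) ^ p + (((j:ℝ) - 1) * t / n) ^ p)
          = ((j:ℝ) ^ p + ((j:ℝ) - 1) ^ p) * (t/n) ^ p := by
        rw [show (j:ℝ) * t / n = (j:ℝ) * (t/n) by ring,
          show ((j:ℝ) - 1) * t / n = ((j:ℝ) - 1) * (t/n) by ring,
          Real.mul_rpow hj0 hδ.le, Real.mul_rpow hj1 hδ.le]
        ring
      have key2 : (((j:ℝ) * t / n) ^ p + (((j:ℝ) - 1) * t / n) ^ p) ^ K
          = ((j:ℝ) ^ p + ((j:ℝ) - 1) ^ p) ^ K * (t/n) := by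
        rw [key, Real.mul_rpow (by positivity) (Real.rpow_nonneg hδ.le p),
          ← Real.rpow_mul hδ.le, hpK, Real.rpow_one]
      have key3 : 2 ^ (-K) * (((j : ℝ) * t / n) ^ p + (((j : ℝ) - 1) * t / n) ^ p) ^ K
            - (1/2) * ((j : ℝ) * t / n + ((j : ℝ) - 1) * t / n)
          = (t/n) * (2 ^ (-K) * ((j:ℝ) ^ p + ((j:ℝ) - 1) ^ p) ^ K
            - (1/2) * ((j:ℝ) + ((j:ℝ) - 1))) := by
        rw [key2]; ring
      rw [key3, abs_mul, abs_of_pos hδ]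
      exact mul_le_mul_of_nonneg_left (key_term hp1 hp2 hK0 hpK hj) hδ.le
    calc (∑ j ∈ Finset.Icc 1 n,
        |2 ^ (-K) * (((j : ℝ) * t / n) ^ p + (((j : ℝ) - 1) * t / n) ^ p) ^ K
          - (1/2) * ((j : ℝ) * t / n + ((j : ℝ) - 1) * t / n)|)
        ≤ ∑ j ∈ Finset.Icc 1 n, (t / n) * (j : ℝ) ^ (1 - p) :=
          Finset.sum_le_sum step
      _ = (t / n) * ∑ j ∈ Finset.Icc 1 n, (j : ℝ) ^ (1 - p) := by
          rw [Finset.mul_sum]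
      _ ≤ (t / n) * ((n:ℝ) ^ (2 - p) / (2 - p)) :=
          mul_le_mul_of_nonneg_left (sum_rpow_bound hp1 hp2 n) hδ.le
      _ = g n := by
          rw [hg]
          have hsplit : (n:ℝ) ^ (2 - p) = (n:ℝ) * (n:ℝ) ^ (1 - p) := by
            rw [show (2:ℝ) - p = 1 + (1 - p) by ring, Real.rpow_add hn0, Real.rpow_one]
          rw [hsplit]
          have h2p : (2:ℝ) - p ≠ 0 := by linarith
          field_simp
  have hgto : Tendsto g atTop (nhds 0) := by
    have h1 : Tendsto (fun x : ℝ => x ^ (1 - p)) atTop (nhds 0) := by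
      have := tendsto_rpow_neg_atTop (show (0:ℝ) < p - 1 by linarith)
      convert this using 2 with x
      ring_nf
    have h2 : Tendsto (fun n : ℕ => ((n:ℝ)) ^ (1 - p)) atTop (nhds 0) :=
      h1.comp tendsto_natCast_atTop_atTop
    have h3 := h2.const_mul (t / (2 - p))
    rw [mul_zero] at h3
    exact h3
  exact squeeze_zero hE0 hEg hgto
end

section
/- Let H ∈ (0,1), K ∈ (0,1) and for an integer j ≥ 2 define f_j(x) = ((x−1)^{2H} + j^{2H})^K − ((x−1)^{2H} + (j−1)^{2H})^K − (x^{2H} + j^{2H})^K + (x^{2H} + (j−1)^{2H})^K on (1,∞). Then f_j(x) > 0 for every x ∈ (1,∞), and f_j(j) = −2^K h(j); in particular h(j) < 0 for every integer j ≥ 2. -/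
open Real Set

lemma concave_diff_aux {p : ℝ} (hp0 : 0 < p) (hp1 : p < 1) {x y c : ℝ}
    (hx : 0 ≤ x) (hxy : x < y) (hc : 0 < c) :
    (y + c) ^ p + x ^ p < (x + c) ^ p + y ^ p := by
  have hcc := Real.strictConcaveOn_rpow hp0 hp1
  have hdpos : 0 < y + c - x := by linarith
  have hy0 : (0:ℝ) ≤ y := by linarith
  have hyc0 : (0:ℝ) ≤ y + c := by linarith
  have hne : x ≠ y + c := by linarith
  have hla : 0 < (y - x) / (y + c - x) := div_pos (by linarith) hdpos
  have hlb : 0 < c / (y + c - x) := div_pos hc hdpos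
  have hlab : (y - x) / (y + c - x) + c / (y + c - x) = 1 := by field_simp; ring
  have h1 := hcc.2 (mem_Ici.2 hx) (mem_Ici.2 hyc0) hne hla hlb hlab
  have h2 := hcc.2 (mem_Ici.2 hx) (mem_Ici.2 hyc0) hne hlb hla (by linarith)
  have e1 : (y - x) / (y + c - x) * x + c / (y + c - x) * (y + c) = x + c := by
    field_simp; ring
  have e2 : c / (y + c - x) * x + (y - x) / (y + c - x) * (y + c) = y := by
    field_simp; ring
  simp only [smul_eq_mul] at h1 h2
  rw [e1] at h1
  rw [e2] at h2
  have k1 : ((y - x)/(y + c - x) + c/(y + c - x)) * x ^ p = x ^ p := by rw [hlab]; ring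
  have k2 : ((y - x)/(y + c - x) + c/(y + c - x)) * (y + c) ^ p = (y + c) ^ p := by
    rw [hlab]; ring
  nlinarith [h1, h2, k1, k2]

lemma diff_anti {p : ℝ} (hp0 : 0 < p) (hp1 : p < 1) {s t a b : ℝ}
    (hs : 0 ≤ s) (hst : s < t) (hb : 0 ≤ b) (hba : b < a) :
    (t + a) ^ p - (t + b) ^ p < (s + a) ^ p - (s + b) ^ p := by
  have := concave_diff_aux hp0 hp1 (x := s + b) (y := t + b) (c := a - b)
    (by linarith) (by linarith) (by linarith)
  have e1 : t + b + (a - b) = t + a := by ring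
  have e2 : s + b + (a - b) = s + a := by ring
  rw [e1, e2] at this
  linarith

/-- For `H ∈ (0,1)`, `K ∈ (0,1)` and an integer `j ≥ 2`, the function
`f_j(x) = ((x-1)^{2H} + j^{2H})^K - ((x-1)^{2H} + (j-1)^{2H})^K - (x^{2H} + j^{2H})^K
+ (x^{2H} + (j-1)^{2H})^K` is positive on `(1,∞)`, `f_j(j) = -2^K h(j)`, and `h(j) < 0`,
where `h(y) = y^{2HK} + (y-1)^{2HK} - (2/2^K)(y^{2H} + (y-1)^{2H})^K`. -/
theorem bifBm_f_pos_h_neg (H K : ℝ) (hH : H ∈ Set.Ioo (0:ℝ) 1) (hK : K ∈ Set.Ioo (0:ℝ) 1)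
    (j : ℕ) (hj : 2 ≤ j) :
    (∀ x : ℝ, x ∈ Set.Ioi (1:ℝ) →
      0 < ((x - 1) ^ (2*H) + (j : ℝ) ^ (2*H)) ^ K
            - ((x - 1) ^ (2*H) + ((j : ℝ) - 1) ^ (2*H)) ^ K
            - (x ^ (2*H) + (j : ℝ) ^ (2*H)) ^ K
            + (x ^ (2*H) + ((j : ℝ) - 1) ^ (2*H)) ^ K)
    ∧
    (((j : ℝ) - 1) ^ (2*H) + (j : ℝ) ^ (2*H)) ^ K
        - (((j : ℝ) - 1) ^ (2*H) + ((j : ℝ) - 1) ^ (2*H)) ^ K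
        - ((j : ℝ) ^ (2*H) + (j : ℝ) ^ (2*H)) ^ K
        + ((j : ℝ) ^ (2*H) + ((j : ℝ) - 1) ^ (2*H)) ^ K
      = -(2 ^ K) * ((j : ℝ) ^ (2*H*K) + ((j : ℝ) - 1) ^ (2*H*K)
          - (2 / 2 ^ K) * ((j : ℝ) ^ (2*H) + ((j : ℝ) - 1) ^ (2*H)) ^ K)
    ∧
    (j : ℝ) ^ (2*H*K) + ((j : ℝ) - 1) ^ (2*H*K)
        - (2 / 2 ^ K) * ((j : ℝ) ^ (2*H) + ((j : ℝ) - 1) ^ (2*H)) ^ K < 0 := by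
  obtain ⟨hH0, hH1⟩ := hH
  obtain ⟨hK0, hK1⟩ := hK
  have hj2 : (2:ℝ) ≤ (j:ℝ) := by exact_mod_cast hj
  have hj10 : (0:ℝ) ≤ (j:ℝ) - 1 := by linarith
  have hj0 : (0:ℝ) ≤ (j:ℝ) := by linarith
  have hjlt : ((j:ℝ) - 1) < (j:ℝ) := by linarith
  have hH2 : 0 < 2 * H := by linarith
  have hblt : ((j:ℝ) - 1) ^ (2*H) < (j:ℝ) ^ (2*H) :=
    Real.rpow_lt_rpow hj10 hjlt hH2
  have hbpos : 0 ≤ ((j:ℝ) - 1) ^ (2*H) := Real.rpow_nonneg hj10 _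
  have part1 : ∀ x : ℝ, x ∈ Set.Ioi (1:ℝ) →
      0 < ((x - 1) ^ (2*H) + (j : ℝ) ^ (2*H)) ^ K
            - ((x - 1) ^ (2*H) + ((j : ℝ) - 1) ^ (2*H)) ^ K
            - (x ^ (2*H) + (j : ℝ) ^ (2*H)) ^ K
            + (x ^ (2*H) + ((j : ℝ) - 1) ^ (2*H)) ^ K := by
    intro x hx
    rw [Set.mem_Ioi] at hx
    have hs : (0:ℝ) ≤ (x - 1) ^ (2*H) := Real.rpow_nonneg (by linarith) _
    have hst : (x - 1) ^ (2*H) < x ^ (2*H) :=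
      Real.rpow_lt_rpow (by linarith) (by linarith) hH2
    have := diff_anti hK0 hK1 hs hst hbpos hblt
    linarith
  refine ⟨part1, ?_, ?_⟩
  · have h2K : (0:ℝ) < 2 ^ K := Real.rpow_pos_of_pos two_pos K
    have eA : ((j:ℝ)) ^ (2*H) + ((j:ℝ)) ^ (2*H) = 2 * ((j:ℝ)) ^ (2*H) := by ring
    have eB : ((j:ℝ) - 1) ^ (2*H) + ((j:ℝ) - 1) ^ (2*H) = 2 * ((j:ℝ) - 1) ^ (2*H) := by ring
    rw [eA, eB, Real.mul_rpow (by norm_num) (Real.rpow_nonneg hj0 _),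
      Real.mul_rpow (by norm_num) hbpos,
      Real.rpow_mul hj0 (2*H) K, Real.rpow_mul hj10 (2*H) K,
      show ((j:ℝ) - 1) ^ (2*H) + (j:ℝ) ^ (2*H) = (j:ℝ) ^ (2*H) + ((j:ℝ) - 1) ^ (2*H) from by ring]
    field_simp
    ring
  · have h2K : (0:ℝ) < 2 ^ K := Real.rpow_pos_of_pos two_pos K
    have hpos := part1 (j:ℝ) (by rw [Set.mem_Ioi]; linarith)
    -- f_j(j) = -(2^K) * h(j)
    have heq :
        (((j : ℝ) - 1) ^ (2*H) + (j : ℝ) ^ (2*H)) ^ K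
          - (((j : ℝ) - 1) ^ (2*H) + ((j : ℝ) - 1) ^ (2*H)) ^ K
          - ((j : ℝ) ^ (2*H) + (j : ℝ) ^ (2*H)) ^ K
          + ((j : ℝ) ^ (2*H) + ((j : ℝ) - 1) ^ (2*H)) ^ K
        = -(2 ^ K) * ((j : ℝ) ^ (2*H*K) + ((j : ℝ) - 1) ^ (2*H*K)
            - (2 / 2 ^ K) * ((j : ℝ) ^ (2*H) + ((j : ℝ) - 1) ^ (2*H)) ^ K) := by
      rw [show ((j:ℝ)) ^ (2*H) + ((j:ℝ)) ^ (2*H) = 2 * ((j:ℝ)) ^ (2*H) from by ring,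
        show ((j:ℝ) - 1) ^ (2*H) + ((j:ℝ) - 1) ^ (2*H) = 2 * ((j:ℝ) - 1) ^ (2*H) from by ring,
        Real.mul_rpow (by norm_num) (Real.rpow_nonneg hj0 _),
        Real.mul_rpow (by norm_num) hbpos,
        Real.rpow_mul hj0 (2*H) K, Real.rpow_mul hj10 (2*H) K,
        show ((j:ℝ) - 1) ^ (2*H) + (j:ℝ) ^ (2*H) = (j:ℝ) ^ (2*H) + ((j:ℝ) - 1) ^ (2*H) from by ring]
      field_simp
      ring
    rw [heq] at hpos
    nlinarith
end

section
/- Let H ∈ (0,1), K ∈ (0,1) with 2HK = 1. Then (i) (1/n²)·Σ_{1 ≤ i < j ≤ n} h(j)² → 0 as n → ∞, and (ii) (1/n²)·( Σ_{i=1}^{n} (h(i) + 2^{1−K}) )² → (2^{1−K})² = 2^{2−2K} as n → ∞. -/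
/-!
Put `p = 2H`, so that `pK = 1`, and `φ(t) = 2 - t - (2/2^K)(1 + (1-t)^p)^K`. Homogeneity gives
`h(x) = x φ(1/x)`, and a first-order expansion shows `φ(0) = φ'(0) = 0`; hence `h(x)` is the slope
of `φ` at `0` evaluated at `1/x`, which tends to `0`. Both limits then follow from the Cesàro
mean of a convergent sequence: in (i) the inner sum has `j - 1 ≤ n` equal terms, and (ii) is
the square of a Cesàro mean.
-/

open Filter Topology Finset

theorem Filter.Tendsto.cesaro_Icc {f : ℕ → ℝ} {a : ℝ} (hf : Tendsto f atTop (𝓝 a)) :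
    Tendsto (fun n : ℕ => (n : ℝ)⁻¹ * ∑ i ∈ Icc 1 n, f i) atTop (𝓝 a) := by
  refine (hf.comp (tendsto_add_atTop_nat 1)).cesaro.congr fun n => ?_
  rw [← Ico_add_one_right_eq_Icc, sum_Ico_eq_sum_range]
  simp only [Function.comp_apply, add_comm, Nat.add_sub_cancel]

theorem tendsto_sum_Icc_sum_Ico_div_sq {f : ℕ → ℝ} (hf0 : ∀ n, 0 ≤ f n)
    (hf : Tendsto f atTop (𝓝 0)) :
    Tendsto (fun n : ℕ => 1 / (n : ℝ) ^ 2 * ∑ j ∈ Icc 1 n, ∑ _i ∈ Ico 1 j, f j)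
      atTop (𝓝 0) := by
  refine squeeze_zero (fun n => ?_) (fun n => ?_) hf.cesaro_Icc
  · exact mul_nonneg (by positivity) (sum_nonneg fun j _ => sum_nonneg fun _ _ => hf0 j)
  · have inner_le : ∀ j ∈ Icc 1 n, ∑ _i ∈ Ico 1 j, f j ≤ n * f j := fun j hj => by
      rw [sum_const, Nat.card_Ico, nsmul_eq_mul]
      gcongr
      · exact hf0 j
      · exact_mod_cast (Nat.sub_le j 1).trans (mem_Icc.mp hj).2
    calc 1 / (n : ℝ) ^ 2 * ∑ j ∈ Icc 1 n, ∑ _i ∈ Ico 1 j, f j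
        ≤ 1 / (n : ℝ) ^ 2 * ∑ j ∈ Icc 1 n, n * f j := by gcongr with j hj; exact inner_le j hj
      _ = (n : ℝ)⁻¹ * ∑ j ∈ Icc 1 n, f j := by
        rw [← mul_sum]
        rcases eq_or_ne (n : ℝ) 0 with hn | hn
        · simp [hn]
        · field_simp

theorem tendsto_sq_sum_Icc_div_sq {f : ℕ → ℝ} {a : ℝ} (hf : Tendsto f atTop (𝓝 a)) :
    Tendsto (fun n : ℕ => 1 / (n : ℝ) ^ 2 * (∑ i ∈ Icc 1 n, f i) ^ 2) atTop (𝓝 (a ^ 2)) :=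
  (hf.cesaro_Icc.pow 2).congr fun n => by rw [mul_pow, inv_pow, one_div]

theorem tendsto_mul_comp_inv_atTop_of_hasDerivAt {φ : ℝ → ℝ} (h0 : φ 0 = 0)
    (hφ : HasDerivAt φ 0 0) : Tendsto (fun x => x * φ x⁻¹) atTop (𝓝 0) := by
  refine (hφ.tendsto_slope_zero_right.comp tendsto_inv_atTop_nhdsGT_zero).congr fun x => ?_
  simp [h0]

noncomputable def bifBmProfile (p K t : ℝ) : ℝ := 2 - t - 2 / 2 ^ K * (1 + (1 - t) ^ p) ^ K

theorem bifBmProfile_zero (p K : ℝ) : bifBmProfile p K 0 = 0 := by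
  have h2K : (2 : ℝ) ^ K ≠ 0 := (Real.rpow_pos_of_pos two_pos K).ne'
  simp only [bifBmProfile, sub_zero, Real.one_rpow]
  field_simp
  norm_num

theorem hasDerivAt_bifBmProfile {p K : ℝ} (hpK : p * K = 1) :
    HasDerivAt (bifBmProfile p K) 0 0 := by
  have hbase : HasDerivAt (fun t : ℝ => 1 + (1 - t) ^ p) (-p) 0 := by
    simpa using (((hasDerivAt_id (0 : ℝ)).const_sub 1).rpow_const (p := p) (by simp)).const_add 1
  have hpow := hbase.rpow_const (p := K) (by norm_num)
  have hφ := ((hasDerivAt_id (0 : ℝ)).const_sub 2).sub (hpow.const_mul (2 / 2 ^ K))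
  -- `φ'(0) = -1 + (2 / 2^K) · K 2^(K-1) · p = -1 + pK`
  have hderiv : -1 - 2 / 2 ^ K * (-p * K * (1 + (1 - 0) ^ p) ^ (K - 1)) = (0 : ℝ) := by
    have h2K : (2 : ℝ) ^ K ≠ 0 := (Real.rpow_pos_of_pos two_pos K).ne'
    rw [sub_zero, Real.one_rpow, one_add_one_eq_two, Real.rpow_sub two_pos, Real.rpow_one]
    field_simp
    linear_combination hpK
  rw [hderiv] at hφ
  exact hφ

noncomputable def bifBmH (H K y : ℝ) : ℝ :=
  y ^ (2 * H * K) + (y - 1) ^ (2 * H * K) - 2 / 2 ^ K * (y ^ (2 * H) + (y - 1) ^ (2 * H)) ^ K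

theorem bifBmH_eq_mul_bifBmProfile {H K x : ℝ} (hHK : 2 * H * K = 1) (hx : 1 ≤ x) :
    bifBmH H K x = x * bifBmProfile (2 * H) K x⁻¹ := by
  have hx0 : 0 < x := one_pos.trans_le hx
  have hsub : 0 ≤ 1 - x⁻¹ := sub_nonneg.mpr (inv_le_one_of_one_le₀ hx)
  have hscale : x * (1 + (1 - x⁻¹) ^ (2 * H)) ^ K = (x ^ (2 * H) + (x - 1) ^ (2 * H)) ^ K := by
    calc x * (1 + (1 - x⁻¹) ^ (2 * H)) ^ K
        = (x ^ (2 * H)) ^ K * (1 + (1 - x⁻¹) ^ (2 * H)) ^ K := by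
          rw [← Real.rpow_mul hx0.le, hHK, Real.rpow_one]
      _ = (x ^ (2 * H) + (x * (1 - x⁻¹)) ^ (2 * H)) ^ K := by
          rw [← Real.mul_rpow (by positivity) (by positivity), Real.mul_rpow hx0.le hsub,
            mul_one_add]
      _ = (x ^ (2 * H) + (x - 1) ^ (2 * H)) ^ K := by
          rw [mul_sub, mul_inv_cancel₀ hx0.ne', mul_one]
  rw [bifBmH, bifBmProfile, hHK, Real.rpow_one, Real.rpow_one, ← hscale, mul_sub, mul_sub,
    mul_inv_cancel₀ hx0.ne']
  ring

theorem tendsto_bifBmH_atTop {H K : ℝ} (hHK : 2 * H * K = 1) :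
    Tendsto (bifBmH H K) atTop (𝓝 0) := by
  refine (tendsto_mul_comp_inv_atTop_of_hasDerivAt (bifBmProfile_zero (2 * H) K)
    (hasDerivAt_bifBmProfile hHK)).congr' ?_
  filter_upwards [eventually_ge_atTop 1] with x hx
  exact (bifBmH_eq_mul_bifBmProfile hHK hx).symm

theorem bifBm_quadratic_variation_sums_general
    (H K : ℝ)
    (hHK : 2*H*K = 1) :
    Tendsto (fun n : ℕ => (1 / (n : ℝ)^2) *
        ∑ j ∈ Finset.Icc 1 n, ∑ i ∈ Finset.Ico 1 j,
          ((j : ℝ) ^ (2*H*K) + ((j : ℝ) - 1) ^ (2*H*K)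
            - (2 / 2 ^ K) * ((j : ℝ) ^ (2*H) + ((j : ℝ) - 1) ^ (2*H)) ^ K)^2)
      atTop (nhds 0)
    ∧
    Tendsto (fun n : ℕ => (1 / (n : ℝ)^2) *
        (∑ i ∈ Finset.Icc 1 n,
          (((i : ℝ) ^ (2*H*K) + ((i : ℝ) - 1) ^ (2*H*K)
            - (2 / 2 ^ K) * ((i : ℝ) ^ (2*H) + ((i : ℝ) - 1) ^ (2*H)) ^ K) + 2 ^ (1 - K)))^2)
      atTop (nhds ((2 ^ ((1:ℝ) - K))^2)) := by
  have hh := (tendsto_bifBmH_atTop hHK).comp tendsto_natCast_atTop_atTop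
  exact ⟨tendsto_sum_Icc_sum_Ico_div_sq (f := fun j => bifBmH H K j ^ 2)
      (fun j => sq_nonneg _) (by simpa using hh.pow 2),
    tendsto_sq_sum_Icc_div_sq (f := fun i => bifBmH H K i + 2 ^ (1 - K))
      (by simpa using hh.add_const (2 ^ (1 - K)))⟩

/-- For `H ∈ (0,1)`, `K ∈ (0,1)` with `2HK = 1`, where
`h(y) = y^{2HK} + (y-1)^{2HK} - (2/2^K)(y^{2H} + (y-1)^{2H})^K`:
(i) `(1/n²) ∑_{1 ≤ i < j ≤ n} h(j)² → 0` and
(ii) `(1/n²) (∑_{i=1}^n (h(i) + 2^{1-K}))² → (2^{1-K})²` as `n → ∞`. -/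
theorem bifBm_quadratic_variation_sums
    (H K : ℝ) (hH : H ∈ Set.Ioo (0:ℝ) 1) (hK : K ∈ Set.Ioo (0:ℝ) 1)
    (hHK : 2*H*K = 1) :
    Tendsto (fun n : ℕ => (1 / (n : ℝ)^2) *
        ∑ j ∈ Finset.Icc 1 n, ∑ i ∈ Finset.Ico 1 j,
          ((j : ℝ) ^ (2*H*K) + ((j : ℝ) - 1) ^ (2*H*K)
            - (2 / 2 ^ K) * ((j : ℝ) ^ (2*H) + ((j : ℝ) - 1) ^ (2*H)) ^ K)^2)
      atTop (nhds 0)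
    ∧
    Tendsto (fun n : ℕ => (1 / (n : ℝ)^2) *
        (∑ i ∈ Finset.Icc 1 n,
          (((i : ℝ) ^ (2*H*K) + ((i : ℝ) - 1) ^ (2*H*K)
            - (2 / 2 ^ K) * ((i : ℝ) ^ (2*H) + ((i : ℝ) - 1) ^ (2*H)) ^ K) + 2 ^ (1 - K)))^2)
      atTop (nhds ((2 ^ ((1:ℝ) - K))^2)) :=
  bifBm_quadratic_variation_sums_general H K hHK
end

section
/- Let H ∈ (0,1) and K ∈ (0,1]. Then for all s,t ≥ 0, 2^{−K}|t−s|^{2HK} ≤ t^{2HK} + s^{2HK} − 2R(t,s) ≤ 2^{1−K}|t−s|^{2HK} (the quasi-helix property of the bifractional covariance: the variance of an increment of the bifractional Brownian motion is bounded above and below by constant multiples of |t−s|^{2HK}). -/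
open Real

lemma qh_subadd {x y p : ℝ} (hx : 0 ≤ x) (hy : 0 ≤ y) (hp : 0 ≤ p) (hp1 : p ≤ 1) :
    (x + y) ^ p ≤ x ^ p + y ^ p := by
  lift x to NNReal using hx
  lift y to NNReal using hy
  exact_mod_cast NNReal.rpow_add_le_add_rpow x y hp hp1

lemma qh_convex2 {x y q : ℝ} (hx : 0 ≤ x) (hy : 0 ≤ y) (hq : 1 ≤ q) :
    (x + y) ^ q ≤ 2 ^ (q - 1) * (x ^ q + y ^ q) := by
  lift x to NNReal using hx
  lift y to NNReal using hy
  exact_mod_cast NNReal.rpow_add_le_mul_rpow_add_rpow x y hq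

lemma qh_bern {z K : ℝ} (hz : 0 ≤ z) (hK0 : 0 ≤ K) (hK1 : K ≤ 1) :
    z ^ K ≤ 1 + K * (z - 1) := by
  have h := rpow_one_add_le_one_add_mul_self (s := z - 1) (by linarith) hK0 hK1
  simpa using h

lemma qh_K_le {K : ℝ} (hK1 : K ≤ 1) : K ≤ 2 ^ (K - 1) := by
  have h1 : (2:ℝ) ^ (K - 1) = Real.exp (Real.log 2 * (K - 1)) := by
    rw [Real.rpow_def_of_pos (by norm_num)]
  have h2 : Real.log 2 * (K - 1) + 1 ≤ Real.exp (Real.log 2 * (K - 1)) :=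
    Real.add_one_le_exp _
  have h3 : Real.log 2 ≤ 1 := by
    have := Real.log_le_sub_one_of_pos (x := 2) (by norm_num)
    linarith
  have h4 : (0:ℝ) ≤ Real.log 2 := Real.log_nonneg (by norm_num)
  nlinarith [h2]

lemma qh_one_sub_le {K : ℝ} (hK0 : 0 ≤ K) : 1 - K ≤ 2 ^ (-K) := by
  have h1 : (2:ℝ) ^ (-K) = Real.exp (Real.log 2 * (-K)) := by
    rw [Real.rpow_def_of_pos (by norm_num)]
  have h2 : Real.log 2 * (-K) + 1 ≤ Real.exp (Real.log 2 * (-K)) := Real.add_one_le_exp _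
  have h3 : Real.log 2 ≤ 1 := by
    have := Real.log_le_sub_one_of_pos (x := 2) (by norm_num)
    linarith
  have h4 : (0:ℝ) ≤ Real.log 2 := Real.log_nonneg (by norm_num)
  nlinarith [h2]

lemma qh_tangent {u v K : ℝ} (hu : 0 < u) (hv : 0 ≤ v) (hK0 : 0 ≤ K) (hK1 : K ≤ 1) :
    (u + v) ^ K ≤ u ^ K + K * v * u ^ (K - 1) := by
  have h1 : u + v = u * (1 + v / u) := by field_simp
  have h2 : (u + v) ^ K = u ^ K * (1 + v / u) ^ K := by
    rw [h1, Real.mul_rpow hu.le (by positivity)]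
  have hvu : (0:ℝ) ≤ v / u := div_nonneg hv hu.le
  have h3 : (1 + v / u) ^ K ≤ 1 + K * (v / u) :=
    rpow_one_add_le_one_add_mul_self (by linarith) hK0 hK1
  have h4 : u ^ K * (1 + K * (v / u)) = u ^ K + K * v * u ^ (K - 1) := by
    rw [Real.rpow_sub hu, Real.rpow_one]
    field_simp
  calc (u + v) ^ K = u ^ K * (1 + v / u) ^ K := h2
    _ ≤ u ^ K * (1 + K * (v / u)) := by
        apply mul_le_mul_of_nonneg_left h3 (Real.rpow_nonneg hu.le K)
    _ = u ^ K + K * v * u ^ (K - 1) := h4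

lemma qh_concave_mean {x y K : ℝ} (hx : 0 ≤ x) (hy : 0 ≤ y) (hK0 : 0 < K) (hK1 : K ≤ 1) :
    x ^ K + y ^ K ≤ 2 ^ (1 - K) * (x + y) ^ K := by
  have hq : 1 ≤ 1 / K := by
    rw [le_div_iff₀ hK0]; linarith
  have h := qh_convex2 (Real.rpow_nonneg hx K) (Real.rpow_nonneg hy K) hq
  have hx' : (x ^ K) ^ (1 / K) = x := by
    rw [← Real.rpow_mul hx, mul_one_div_cancel hK0.ne', Real.rpow_one]
  have hy' : (y ^ K) ^ (1 / K) = y := by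
    rw [← Real.rpow_mul hy, mul_one_div_cancel hK0.ne', Real.rpow_one]
  rw [hx', hy'] at h
  have h5 := Real.rpow_le_rpow (Real.rpow_nonneg (by positivity) _) h hK0.le
  rw [← Real.rpow_mul (by positivity), one_div_mul_cancel hK0.ne', Real.rpow_one] at h5
  rw [Real.mul_rpow (Real.rpow_nonneg (by norm_num) _) (by positivity),
    ← Real.rpow_mul (by norm_num)] at h5
  have : (1 / K - 1) * K = 1 - K := by field_simp
  rwa [this] at h5

lemma qh_core {K y : ℝ} (hK0 : 0 < K) (hK1 : K ≤ 1) (hy0 : 0 ≤ y) (hy1 : y ≤ 1) :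
    2 ^ (1 - K) * (1 + y * y) ^ K ≤ 1 + y ^ (2 * K) + 2 ^ (-K) * (1 - y) ^ (2 * K) := by
  have h2K0 : (0:ℝ) < 2 * K := by linarith
  have hyy : 0 ≤ 1 + y * y := by positivity
  rcases le_or_gt (2 * K) 1 with hA | hB
  · -- K ≤ 1/2 : linearization
    have e1 : (2:ℝ) ^ (1 - K) * (1 + y * y) ^ K = 2 * (((1 + y * y) / 2) ^ K) := by
      rw [Real.div_rpow hyy (by norm_num), Real.rpow_sub (by norm_num), Real.rpow_one]
      ring
    have hb : ((1 + y * y) / 2) ^ K ≤ 1 + K * ((1 + y * y) / 2 - 1) :=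
      qh_bern (by positivity) hK0.le hK1
    have hy2 : y ≤ y ^ (2 * K) := by
      have := Real.rpow_le_rpow_of_exponent_ge' hy0 hy1 h2K0.le hA
      simpa using this
    have hy3 : 1 - y ≤ (1 - y) ^ (2 * K) := by
      have := Real.rpow_le_rpow_of_exponent_ge' (by linarith : (0:ℝ) ≤ 1 - y)
        (by linarith) h2K0.le hA
      simpa using this
    have h4 : 1 - K ≤ (2:ℝ) ^ (-K) := qh_one_sub_le hK0.le
    have h5 : (1 - K) * (1 - y) ≤ (2:ℝ) ^ (-K) * (1 - y) ^ (2 * K) := by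
      apply mul_le_mul h4 hy3 (by linarith) (by positivity)
    have hyy2 : y * y ≤ y := by nlinarith
    rw [e1]
    nlinarith [hb, hy2, h5]
  · -- K ≥ 1/2 : parallelogram + tangent
    set u : ℝ := (1 + y) * (1 + y) with hu_def
    set v : ℝ := (1 - y) * (1 - y) with hv_def
    have hu1 : (1:ℝ) ≤ u := by nlinarith
    have hu0 : (0:ℝ) < u := by linarith
    have hv0 : (0:ℝ) ≤ v := by nlinarith
    have hid : 1 + y * y = (u + v) / 2 := by rw [hu_def, hv_def]; ring
    have e1 : (2:ℝ) ^ (1 - K) * (1 + y * y) ^ K = 2 ^ (1 - 2 * K) * (u + v) ^ K := by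
      rw [hid, Real.div_rpow (by positivity) (by norm_num)]
      rw [show (2:ℝ) ^ (1 - 2*K) = 2 ^ (1 - K) / 2 ^ K by
        rw [← Real.rpow_sub (by norm_num)]; ring_nf]
      ring
    have htan : (u + v) ^ K ≤ u ^ K + K * v * u ^ (K - 1) :=
      qh_tangent hu0 hv0 hK0.le hK1
    -- term 1
    have hupow : u ^ K = (1 + y) ^ (2 * K) := by
      rw [show u = (1 + y) ^ (2:ℝ) by rw [Real.rpow_two]; ring,
        ← Real.rpow_mul (by linarith)]
    have ht1' : (1 + y) ^ (2 * K) ≤ 2 ^ (2 * K - 1) * (1 + y ^ (2 * K)) := by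
      have h := qh_convex2 (by norm_num : (0:ℝ) ≤ 1) hy0 hB.le
      rwa [Real.one_rpow] at h
    have h2a : (2:ℝ) ^ (1 - 2 * K) * 2 ^ (2 * K - 1) = 1 := by
      rw [← Real.rpow_add (by norm_num)]
      norm_num
    have ht1 : (2:ℝ) ^ (1 - 2 * K) * u ^ K ≤ 1 + y ^ (2 * K) := by
      calc (2:ℝ) ^ (1 - 2 * K) * u ^ K = 2 ^ (1 - 2 * K) * (1 + y) ^ (2 * K) := by
            rw [hupow]
        _ ≤ 2 ^ (1 - 2 * K) * (2 ^ (2 * K - 1) * (1 + y ^ (2 * K))) := by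
            apply mul_le_mul_of_nonneg_left ht1' (by positivity)
        _ = (2 ^ (1 - 2 * K) * 2 ^ (2 * K - 1)) * (1 + y ^ (2 * K)) := by ring
        _ = 1 + y ^ (2 * K) := by rw [h2a]; ring
    -- term 2
    have hv2 : v ≤ (1 - y) ^ (2 * K) := by
      have h := Real.rpow_le_rpow_of_exponent_ge' (by linarith : (0:ℝ) ≤ 1 - y)
        (by linarith : 1 - y ≤ 1) h2K0.le (by linarith : 2 * K ≤ 2)
      rw [Real.rpow_two] at h
      calc v = (1 - y) ^ (2:ℕ) := by rw [hv_def]; ring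
        _ ≤ (1 - y) ^ (2 * K) := h
    have hum : u ^ (K - 1) ≤ 1 :=
      Real.rpow_le_one_of_one_le_of_nonpos hu1 (by linarith)
    have hc : K * (2:ℝ) ^ (1 - 2 * K) ≤ 2 ^ (-K) := by
      have h := qh_K_le hK1
      have h2 : (2:ℝ) ^ (K - 1) * 2 ^ (1 - 2 * K) = 2 ^ (-K) := by
        rw [← Real.rpow_add (by norm_num)]
        ring_nf
      calc K * (2:ℝ) ^ (1 - 2 * K) ≤ 2 ^ (K - 1) * 2 ^ (1 - 2 * K) := by
            apply mul_le_mul_of_nonneg_right h (by positivity)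
        _ = 2 ^ (-K) := h2
    have ht2 : (2:ℝ) ^ (1 - 2 * K) * (K * v * u ^ (K - 1)) ≤ 2 ^ (-K) * (1 - y) ^ (2 * K) := by
      have p0 : K * v * u ^ (K - 1) ≤ K * v := by
        calc K * v * u ^ (K - 1) ≤ K * v * 1 := by
              exact mul_le_mul_of_nonneg_left hum (mul_nonneg hK0.le hv0)
          _ = K * v := by ring
      have p1 : K * v ≤ K * (1 - y) ^ (2 * K) := mul_le_mul_of_nonneg_left hv2 hK0.le
      calc (2:ℝ) ^ (1 - 2 * K) * (K * v * u ^ (K - 1))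
          ≤ 2 ^ (1 - 2 * K) * (K * (1 - y) ^ (2 * K)) := by
            apply mul_le_mul_of_nonneg_left (p0.trans p1) (by positivity)
        _ = (K * 2 ^ (1 - 2 * K)) * (1 - y) ^ (2 * K) := by ring
        _ ≤ 2 ^ (-K) * (1 - y) ^ (2 * K) := by
            exact mul_le_mul_of_nonneg_right hc (Real.rpow_nonneg (by linarith) _)
    rw [e1]
    calc (2:ℝ) ^ (1 - 2 * K) * (u + v) ^ K
        ≤ 2 ^ (1 - 2 * K) * (u ^ K + K * v * u ^ (K - 1)) := by
          apply mul_le_mul_of_nonneg_left htan (by positivity)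
      _ = 2 ^ (1 - 2 * K) * u ^ K + 2 ^ (1 - 2 * K) * (K * v * u ^ (K - 1)) := by ring
      _ ≤ (1 + y ^ (2 * K)) + 2 ^ (-K) * (1 - y) ^ (2 * K) := add_le_add ht1 ht2
      _ = 1 + y ^ (2 * K) + 2 ^ (-K) * (1 - y) ^ (2 * K) := by ring

lemma qh_core' {K a b : ℝ} (hK0 : 0 < K) (hK1 : K ≤ 1) (hb : 0 ≤ b) (hba : b ≤ a) :
    2 ^ (1 - K) * (a * a + b * b) ^ K
      ≤ a ^ (2 * K) + b ^ (2 * K) + 2 ^ (-K) * (a - b) ^ (2 * K) := by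
  have ha : 0 ≤ a := hb.trans hba
  have h2K0 : (0:ℝ) < 2 * K := by linarith
  rcases eq_or_lt_of_le ha with h0 | ha0
  · have ha0 : a = 0 := h0.symm
    have hb0 : b = 0 := le_antisymm (ha0 ▸ hba) hb
    rw [ha0, hb0]
    simp [Real.zero_rpow hK0.ne', Real.zero_rpow h2K0.ne']
  · set y := b / a with hy_def
    have hy0 : 0 ≤ y := div_nonneg hb ha0.le
    have hy1 : y ≤ 1 := div_le_one_of_le₀ hba ha0.le
    have h := qh_core hK0 hK1 hy0 hy1
    have hm := mul_le_mul_of_nonneg_left h (Real.rpow_nonneg ha0.le (2 * K))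
    have ha2 : a ^ (2 * K) = (a * a) ^ K := by
      rw [show a * a = a ^ (2:ℝ) by rw [Real.rpow_two]; ring, ← Real.rpow_mul ha0.le]
    have E1 : a ^ (2 * K) * (2 ^ (1 - K) * (1 + y * y) ^ K)
        = 2 ^ (1 - K) * (a * a + b * b) ^ K := by
      rw [ha2, show (a*a) ^ K * (2 ^ (1-K) * (1 + y*y) ^ K)
            = 2 ^ (1-K) * ((a*a) ^ K * (1 + y*y) ^ K) by ring,
        ← Real.mul_rpow (by positivity) (by positivity),
        show a * a * (1 + y * y) = a * a + (a*y) * (a*y) by ring,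
        show a * y = b by rw [hy_def]; field_simp]
    have E2 : a ^ (2 * K) * y ^ (2 * K) = b ^ (2 * K) := by
      rw [← Real.mul_rpow ha0.le hy0, show a * y = b by rw [hy_def]; field_simp]
    have E3 : a ^ (2 * K) * (1 - y) ^ (2 * K) = (a - b) ^ (2 * K) := by
      rw [← Real.mul_rpow ha0.le (by linarith), show a * (1 - y) = a - b by
        rw [hy_def]; field_simp]
    calc 2 ^ (1 - K) * (a * a + b * b) ^ K
        = a ^ (2 * K) * (2 ^ (1 - K) * (1 + y * y) ^ K) := E1.symm
      _ ≤ a ^ (2 * K) * (1 + y ^ (2 * K) + 2 ^ (-K) * (1 - y) ^ (2 * K)) := hm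
      _ = a ^ (2 * K) + a ^ (2 * K) * y ^ (2 * K)
            + 2 ^ (-K) * (a ^ (2 * K) * (1 - y) ^ (2 * K)) := by ring
      _ = a ^ (2 * K) + b ^ (2 * K) + 2 ^ (-K) * (a - b) ^ (2 * K) := by rw [E2, E3]

lemma qh_star {H K s t : ℝ} (hH0 : 0 < H) (hH1 : H ≤ 1) (hK0 : 0 < K) (hK1 : K ≤ 1)
    (hs : 0 ≤ s) (hst : s ≤ t) :
    2 ^ (1 - K) * (t ^ (2 * H) + s ^ (2 * H)) ^ K
      ≤ t ^ (2 * H * K) + s ^ (2 * H * K) + 2 ^ (-K) * (t - s) ^ (2 * H * K) := by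
  have ht : 0 ≤ t := hs.trans hst
  have hts : 0 ≤ t - s := sub_nonneg.2 hst
  set a := t ^ H with ha_def
  set b := s ^ H with hb_def
  have hb : 0 ≤ b := Real.rpow_nonneg hs H
  have hba : b ≤ a := Real.rpow_le_rpow hs hst hH0.le
  have h := qh_core' hK0 hK1 hb hba
  have e1 : a * a = t ^ (2 * H) := by
    rw [ha_def, show a * a = a ^ (2:ℝ) by rw [Real.rpow_two]; ring, ha_def,
      ← Real.rpow_mul ht]
    norm_num [mul_comm]
  have e1s : b * b = s ^ (2 * H) := by
    rw [hb_def, show b * b = b ^ (2:ℝ) by rw [Real.rpow_two]; ring, hb_def,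
      ← Real.rpow_mul hs]
    norm_num [mul_comm]
  have e2 : a ^ (2 * K) = t ^ (2 * H * K) := by
    rw [ha_def, ← Real.rpow_mul ht]
    congr 1
    ring
  have e2s : b ^ (2 * K) = s ^ (2 * H * K) := by
    rw [hb_def, ← Real.rpow_mul hs]
    congr 1
    ring
  have e4 : (a - b) ^ (2 * K) ≤ (t - s) ^ (2 * H * K) := by
    have hsub : a - b ≤ (t - s) ^ H := by
      have h1 := qh_subadd hts hs hH0.le hH1
      rw [sub_add_cancel] at h1
      have : a ≤ (t - s) ^ H + b := h1
      linarith
    have h0 : 0 ≤ a - b := sub_nonneg.2 hba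
    have h2 := Real.rpow_le_rpow h0 hsub (by positivity : (0:ℝ) ≤ 2 * K)
    rwa [← Real.rpow_mul hts, show H * (2 * K) = 2 * H * K by ring] at h2
  rw [e1, e1s, e2, e2s] at h
  have e5 : 2 ^ (-K) * (a - b) ^ (2 * K) ≤ 2 ^ (-K) * (t - s) ^ (2 * H * K) :=
    mul_le_mul_of_nonneg_left e4 (Real.rpow_nonneg (by norm_num) _)
  linarith

/-- Quasi-helix property of the bifractional covariance
`R(t,s) = 2^{-K}((t^{2H} + s^{2H})^K - |t-s|^{2HK})`: for `H ∈ (0,1)`, `K ∈ (0,1]` and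
`s, t ≥ 0`, `2^{-K}|t-s|^{2HK} ≤ t^{2HK} + s^{2HK} - 2R(t,s) ≤ 2^{1-K}|t-s|^{2HK}`. -/
theorem bifBm_quasi_helix
    (H K : ℝ) (hH : H ∈ Set.Ioo (0:ℝ) 1) (hK : K ∈ Set.Ioc (0:ℝ) 1)
    (s t : ℝ) (hs : 0 ≤ s) (ht : 0 ≤ t) :
    2 ^ (-K) * |t - s| ^ (2*H*K)
      ≤ t ^ (2*H*K) + s ^ (2*H*K)
          - 2 * (2 ^ (-K) * ((t ^ (2*H) + s ^ (2*H)) ^ K - |t - s| ^ (2*H*K)))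
    ∧ t ^ (2*H*K) + s ^ (2*H*K)
          - 2 * (2 ^ (-K) * ((t ^ (2*H) + s ^ (2*H)) ^ K - |t - s| ^ (2*H*K)))
      ≤ 2 ^ (1 - K) * |t - s| ^ (2*H*K) := by
  obtain ⟨hH0, hH1⟩ := hH
  obtain ⟨hK0, hK1⟩ := hK
  have h2 : (2:ℝ) ^ (1 - K) = 2 * 2 ^ (-K) := by
    rw [show (1:ℝ) - K = 1 + -K by ring, Real.rpow_add (by norm_num), Real.rpow_one]
  have hup := qh_concave_mean (Real.rpow_nonneg ht (2*H)) (Real.rpow_nonneg hs (2*H)) hK0 hK1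
  rw [← Real.rpow_mul ht, ← Real.rpow_mul hs] at hup
  rcases le_total s t with hst | hst
  · have habs : |t - s| = t - s := abs_of_nonneg (by linarith)
    rw [habs]
    have hlow := qh_star hH0 hH1.le hK0 hK1 hs hst
    have hx : 2 * (2 ^ (-K) * ((t ^ (2*H) + s ^ (2*H)) ^ K - (t - s) ^ (2*H*K)))
        = 2 ^ (1-K) * (t ^ (2*H) + s ^ (2*H)) ^ K - 2 ^ (1-K) * (t - s) ^ (2*H*K) := by
      rw [h2]; ring
    have hy : 2 ^ (1-K) * (t - s) ^ (2*H*K) = 2 * (2 ^ (-K) * (t - s) ^ (2*H*K)) := by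
      rw [h2]; ring
    constructor
    · linarith [hlow, hx, hy]
    · linarith [hup, hx, hy]
  · have habs : |t - s| = s - t := by rw [abs_sub_comm]; exact abs_of_nonneg (by linarith)
    rw [habs]
    have hlow := qh_star hH0 hH1.le hK0 hK1 ht hst
    rw [show s ^ (2*H) + t ^ (2*H) = t ^ (2*H) + s ^ (2*H) from add_comm _ _] at hlow
    have hx : 2 * (2 ^ (-K) * ((t ^ (2*H) + s ^ (2*H)) ^ K - (s - t) ^ (2*H*K)))
        = 2 ^ (1-K) * (t ^ (2*H) + s ^ (2*H)) ^ K - 2 ^ (1-K) * (s - t) ^ (2*H*K) := by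
      rw [h2]; ring
    have hy : 2 ^ (1-K) * (s - t) ^ (2*H*K) = 2 * (2 ^ (-K) * (s - t) ^ (2*H*K)) := by
      rw [h2]; ring
    constructor
    · linarith [hlow, hx, hy]
    · linarith [hup, hx, hy]
end

section
/- Let H ∈ (0,1) and K ∈ (0,1]. Then R(t,s) ≥ 0 for all s,t ≥ 0, and there exists a constant C = C(H,K) > 0 such that R(t,s) ≤ C (st)^{HK} for all s,t > 0. -/
lemma rpow_add_le_add_rpow' (a b p : ℝ) (ha : 0 ≤ a) (hb : 0 ≤ b) (hp0 : 0 ≤ p) (hp1 : p ≤ 1) :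
    (a + b) ^ p ≤ a ^ p + b ^ p := by
  lift a to NNReal using ha
  lift b to NNReal using hb
  exact_mod_cast NNReal.rpow_add_le_add_rpow a b hp0 hp1

lemma key3 (α : ℝ) (hα0 : 0 < α) (hα2 : α ≤ 2) (s t : ℝ) (hs : 0 < s) (hst : s ≤ t) :
    t ^ α + s ^ α - (t - s) ^ α ≤ 3 * (s * t) ^ (α / 2) := by
  have ht : 0 < t := hs.trans_le hst
  have hsα : s ^ α ≤ (s * t) ^ (α / 2) := by
    calc s ^ α = s ^ (α/2) * s ^ (α/2) := by rw [← Real.rpow_add hs, add_halves]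
    _ ≤ s ^ (α/2) * t ^ (α/2) := by
        gcongr
    _ = (s * t) ^ (α/2) := (Real.mul_rpow hs.le ht.le).symm
  have hst0 : (0:ℝ) ≤ (s * t) ^ (α / 2) := Real.rpow_nonneg (by positivity) _
  rcases le_or_gt α 1 with h1 | h1
  · have hts : (0:ℝ) ≤ t - s := sub_nonneg.2 hst
    have ht' : t ^ α ≤ (t - s) ^ α + s ^ α := by
      have := rpow_add_le_add_rpow' (t - s) s α hts hs.le hα0.le h1
      simpa using this
    linarith
  · have hx0 : 0 < s / t := div_pos hs ht
    have hx1 : s / t ≤ 1 := (div_le_one ht).2 hst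
    have hb : 1 - α * (s / t) ≤ (1 - s / t) ^ α := by
      have := one_add_mul_self_le_rpow_one_add (s := -(s/t)) (by linarith) h1.le
      simpa [sub_eq_add_neg, mul_comm] using this
    have h2 : (t - s) ^ α = t ^ α * (1 - s / t) ^ α := by
      rw [show t - s = t * (1 - s / t) by field_simp, Real.mul_rpow ht.le (by linarith)]
    have htα : (0:ℝ) < t ^ α := Real.rpow_pos_of_pos ht α
    have h3 : t ^ α - (t - s) ^ α ≤ t ^ α * (α * (s / t)) := by
      rw [h2]; nlinarith [mul_le_mul_of_nonneg_left hb htα.le]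
    have hxx : s / t ≤ (s / t) ^ (α / 2) := by
      calc s / t = (s / t) ^ (1:ℝ) := (Real.rpow_one _).symm
      _ ≤ (s / t) ^ (α / 2) := Real.rpow_le_rpow_of_exponent_ge hx0 hx1 (by linarith)
    have heq : t ^ α * (s / t) ^ (α / 2) = (s * t) ^ (α / 2) := by
      have htα2 : t ^ α = t ^ (α/2) * t ^ (α/2) := by rw [← Real.rpow_add ht, add_halves]
      have htne : t ^ (α/2) ≠ 0 := (Real.rpow_pos_of_pos ht _).ne'
      rw [Real.div_rpow hs.le ht.le, Real.mul_rpow hs.le ht.le, htα2]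
      field_simp
    have h4 : t ^ α * (s / t) ≤ (s * t) ^ (α / 2) := by
      calc t ^ α * (s / t) ≤ t ^ α * (s / t) ^ (α / 2) :=
            mul_le_mul_of_nonneg_left hxx htα.le
      _ = (s * t) ^ (α / 2) := heq
    nlinarith [mul_le_mul_of_nonneg_left h4 hα0.le]

lemma inner_le (H K : ℝ) (hH0 : 0 < H) (hK0 : 0 < K) (s t : ℝ) (hs : 0 ≤ s) (ht : 0 ≤ t) :
    |t - s| ^ (2*H*K) ≤ (t ^ (2*H) + s ^ (2*H)) ^ K := by
  have key : ∀ a b : ℝ, 0 ≤ a → a ≤ b → |b - a| ^ (2*H) ≤ b ^ (2*H) + a ^ (2*H) := by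
    intro a b ha hab
    have h1 : |b - a| ^ (2*H) ≤ b ^ (2*H) :=
      Real.rpow_le_rpow (abs_nonneg _) (by rw [abs_of_nonneg (by linarith)]; linarith)
        (by positivity)
    have := Real.rpow_nonneg ha (2*H)
    linarith
  have hbase : |t - s| ^ (2*H) ≤ t ^ (2*H) + s ^ (2*H) := by
    rcases le_total s t with h | h
    · exact key s t hs h
    · have := key t s ht h
      rw [abs_sub_comm]; linarith
  rw [Real.rpow_mul (abs_nonneg _)]
  exact Real.rpow_le_rpow (Real.rpow_nonneg (abs_nonneg _) _) hbase hK0.le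

/-- For `H ∈ (0,1)`, `K ∈ (0,1]`, the bifractional covariance
`R(t,s) = 2^{-K}((t^{2H} + s^{2H})^K - |t-s|^{2HK})` is nonnegative for `s, t ≥ 0`, and
there is a constant `C = C(H,K) > 0` with `R(t,s) ≤ C (st)^{HK}` for all `s, t > 0`. -/
theorem bifBm_covariance_nonneg_and_bound
    (H K : ℝ) (hH : H ∈ Set.Ioo (0:ℝ) 1) (hK : K ∈ Set.Ioc (0:ℝ) 1) :
    (∀ s t : ℝ, 0 ≤ s → 0 ≤ t →
      0 ≤ 2 ^ (-K) * ((t ^ (2*H) + s ^ (2*H)) ^ K - |t - s| ^ (2*H*K)))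
    ∧
    ∃ C : ℝ, 0 < C ∧ ∀ s t : ℝ, 0 < s → 0 < t →
      2 ^ (-K) * ((t ^ (2*H) + s ^ (2*H)) ^ K - |t - s| ^ (2*H*K))
        ≤ C * (s * t) ^ (H*K) := by
  obtain ⟨hH0, hH1⟩ := hH
  obtain ⟨hK0, hK1⟩ := hK
  constructor
  · intro s t hs ht
    have := inner_le H K hH0 hK0 s t hs ht
    have h2 : (0:ℝ) ≤ (2:ℝ) ^ (-K) := Real.rpow_nonneg (by norm_num) _
    nlinarith
  · refine ⟨3, by norm_num, ?_⟩
    have main : ∀ s t : ℝ, 0 < s → s ≤ t →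
        2 ^ (-K) * ((t ^ (2*H) + s ^ (2*H)) ^ K - |t - s| ^ (2*H*K))
          ≤ 3 * (s * t) ^ (H*K) := by
      intro s t hs hst
      have ht : 0 < t := hs.trans_le hst
      have h2K : (2:ℝ) ^ (-K) ≤ 1 :=
        Real.rpow_le_one_of_one_le_of_nonpos one_le_two (by linarith)
      have hnn : 0 ≤ (t ^ (2*H) + s ^ (2*H)) ^ K - |t - s| ^ (2*H*K) :=
        sub_nonneg.2 (inner_le H K hH0 hK0 s t hs.le ht.le)
      have hsub : (t ^ (2*H) + s ^ (2*H)) ^ K ≤ t ^ (2*H*K) + s ^ (2*H*K) := by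
        have h := rpow_add_le_add_rpow' (t ^ (2*H)) (s ^ (2*H)) K (by positivity)
          (by positivity) hK0.le hK1
        rwa [← Real.rpow_mul ht.le, ← Real.rpow_mul hs.le] at h
      have habs : |t - s| = t - s := abs_of_nonneg (by linarith)
      have hk3 := key3 (2*H*K) (by positivity) (by nlinarith) s t hs hst
      rw [show (2*H*K)/2 = H*K by ring] at hk3
      have hfinal : (t ^ (2*H) + s ^ (2*H)) ^ K - |t - s| ^ (2*H*K)
          ≤ 3 * (s * t) ^ (H*K) := by
        rw [habs]; linarith
      calc 2 ^ (-K) * ((t ^ (2*H) + s ^ (2*H)) ^ K - |t - s| ^ (2*H*K))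
          ≤ 1 * ((t ^ (2*H) + s ^ (2*H)) ^ K - |t - s| ^ (2*H*K)) :=
            mul_le_mul_of_nonneg_right h2K hnn
        _ = (t ^ (2*H) + s ^ (2*H)) ^ K - |t - s| ^ (2*H*K) := one_mul _
        _ ≤ 3 * (s * t) ^ (H*K) := hfinal
    intro s t hs ht
    rcases le_total s t with h | h
    · exact main s t hs h
    · have := main t s ht h
      rw [abs_sub_comm, add_comm (s ^ (2*H)), mul_comm t s] at this
      exact this
end
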